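/- arXiv:1911.07627 — 4 statements merged into one kernel-verified Lean document; each statement's English description precedes it below -/
import Mathlib

section
/- Let (A,φ) and (B,ψ) be *-probability spaces. If u₁,…,u_L ∈ A is a Haar unitary system (i.e., *-free Haar unitaries) and v₁,…,v_L ∈ B are unitaries, then the family (u₁⊗v₁,…,u_L⊗v_L) is a Haar unitary system in the tensor product *-probability space (A⊗B, φ⊗ψ). -/
open scoped TensorProduct ComplexOrder

/-- `u` is a unitary element of a *-ring. -/
def IsUnitaryElem {A : Type*} [Ring A] [StarRing A] (u : A) : Prop :=
  star u * u = 1 ∧ u * star u = 1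

/-- `u` is a Haar unitary with respect to the linear functional `φ`:
it is unitary and `φ(uⁿ) = 0` for every nonzero integer `n` (equivalently,
`φ(uⁿ) = φ((u*)ⁿ) = 0` for all `n ≥ 1`). -/
def IsHaarUnitary {A : Type*} [Ring A] [Algebra ℂ A] [StarRing A]
    (φ : A →ₗ[ℂ] ℂ) (u : A) : Prop :=
  IsUnitaryElem u ∧ ∀ n : ℕ, n ≠ 0 → φ (u ^ n) = 0 ∧ φ ((star u) ^ n) = 0

/-- The family `u₁,…,u_L` is *-free with respect to `φ`: every alternating
product of `φ`-centered elements of the generated unital *-subalgebras has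
`φ`-value zero. -/
def AreStarFree {A : Type*} [Ring A] [Algebra ℂ A] [StarRing A]
    [StarModule ℂ A] (φ : A →ₗ[ℂ] ℂ) {L : ℕ} (u : Fin L → A) : Prop :=
  ∀ (t : ℕ) (i : Fin t → Fin L) (a : Fin t → A),
    (∀ k, a k ∈ StarAlgebra.adjoin ℂ ({u (i k)} : Set A)) →
    (∀ (k : Fin t) (h : (k : ℕ) + 1 < t), i k ≠ i ⟨(k : ℕ) + 1, h⟩) →
    (∀ k, φ (a k) = 0) →
    φ (List.ofFn a).prod = 0

/-- A Haar unitary system: a family of *-free Haar unitaries. -/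
def IsHaarUnitarySystem {A : Type*} [Ring A] [Algebra ℂ A] [StarRing A]
    [StarModule ℂ A] (φ : A →ₗ[ℂ] ℂ) {L : ℕ} (u : Fin L → A) : Prop :=
  (∀ ℓ, IsHaarUnitary φ (u ℓ)) ∧ AreStarFree φ u

attribute [-instance] TensorProduct.instStar TensorProduct.instInvolutiveStar
  TensorProduct.instStarAddMonoid TensorProduct.instStarModule
  TensorProduct.instStarMul TensorProduct.instStarRing

set_option linter.unusedSectionVars false

section ZPow

variable {C : Type*} [Ring C] [Algebra ℂ C] [StarRing C]

/-- Signed power of a unitary: `w^m` for `m ≥ 0`, `(w*)^(-m)` for `m < 0`. -/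
def zpw (w : C) (m : ℤ) : C :=
  if 0 ≤ m then w ^ m.toNat else (star w) ^ (-m).toNat

lemma zpw_zero (w : C) : zpw w 0 = 1 := by simp [zpw]

lemma zpw_one (w : C) : zpw w 1 = w := by simp [zpw]

lemma pow_mul_star_pow {w : C} (hw' : w * star w = 1) (b : ℕ) :
    w ^ b * (star w) ^ b = 1 := by
  induction b with
  | zero => simp
  | succ n ih =>
    rw [pow_succ, pow_succ', mul_assoc, ← mul_assoc w, hw', one_mul, ih]

lemma star_pow_mul_pow {w : C} (hw : star w * w = 1) (b : ℕ) :
    (star w) ^ b * w ^ b = 1 := by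
  have := pow_mul_star_pow (w := star w) (by rwa [star_star]) b
  rwa [star_star] at this

lemma pow_mul_star_pow_of_le {w : C} (hw' : w * star w = 1) {a b : ℕ} (h : b ≤ a) :
    w ^ a * (star w) ^ b = w ^ (a - b) := by
  have : a = (a - b) + b := by omega
  rw [this, pow_add, mul_assoc, pow_mul_star_pow hw', mul_one]
  congr 1; omega

lemma pow_mul_star_pow_of_ge {w : C} (hw' : w * star w = 1) {a b : ℕ} (h : a ≤ b) :
    w ^ a * (star w) ^ b = (star w) ^ (b - a) := by
  have : b = a + (b - a) := by omega
  rw [this, pow_add, ← mul_assoc, pow_mul_star_pow hw', one_mul]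
  congr 1; omega

lemma star_pow_mul_pow_of_le {w : C} (hw : star w * w = 1) {a b : ℕ} (h : b ≤ a) :
    (star w) ^ a * w ^ b = (star w) ^ (a - b) := by
  have := pow_mul_star_pow_of_le (w := star w) (by rwa [star_star]) h
  rwa [star_star] at this

lemma star_pow_mul_pow_of_ge {w : C} (hw : star w * w = 1) {a b : ℕ} (h : a ≤ b) :
    (star w) ^ a * w ^ b = w ^ (b - a) := by
  have := pow_mul_star_pow_of_ge (w := star w) (by rwa [star_star]) h
  rwa [star_star] at this

lemma zpw_mul {w : C} (hw : star w * w = 1) (hw' : w * star w = 1) (m n : ℤ) :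
    zpw w m * zpw w n = zpw w (m + n) := by
  unfold zpw
  rcases le_or_gt 0 m with hm | hm <;> rcases le_or_gt 0 n with hn | hn
  · rw [if_pos hm, if_pos hn, if_pos (by omega), ← pow_add]
    congr 1; omega
  · rw [if_pos hm, if_neg (by omega)]
    rcases le_or_gt 0 (m + n) with h | h
    · rw [if_pos h, pow_mul_star_pow_of_le hw' (by omega)]
      congr 1; omega
    · rw [if_neg (by omega), pow_mul_star_pow_of_ge hw' (by omega)]
      congr 1; omega
  · rw [if_neg (by omega), if_pos hn]
    rcases le_or_gt 0 (m + n) with h | h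
    · rw [if_pos h, star_pow_mul_pow_of_ge hw (by omega)]
      congr 1; omega
    · rw [if_neg (by omega), star_pow_mul_pow_of_le hw (by omega)]
      congr 1; omega
  · rw [if_neg (by omega), if_neg (by omega), if_neg (by omega), ← pow_add]
    congr 1; omega

lemma star_zpw (w : C) (m : ℤ) : star (zpw w m) = zpw w (-m) := by
  unfold zpw
  rcases lt_trichotomy m 0 with h | h | h
  · rw [if_neg (by omega), if_pos (by omega), star_pow, star_star]
  · subst h; simp
  · rw [if_pos (by omega), if_neg (by omega), star_pow, neg_neg]

variable [StarModule ℂ C]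

lemma zpw_mem_adjoin (w : C) (m : ℤ) :
    zpw w m ∈ StarAlgebra.adjoin ℂ ({w} : Set C) := by
  have hw : w ∈ StarAlgebra.adjoin ℂ ({w} : Set C) :=
    StarAlgebra.subset_adjoin ℂ _ rfl
  unfold zpw
  split
  · exact pow_mem hw _
  · exact pow_mem (star_mem hw) _

lemma span_zpw_mul_gen {w : C} (hw : star w * w = 1) (hw' : w * star w = 1)
    (m : ℤ) {y : C} (hy : y ∈ Submodule.span ℂ (Set.range (zpw w))) :
    zpw w m * y ∈ Submodule.span ℂ (Set.range (zpw w)) := by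
  induction hy using Submodule.span_induction with
  | mem s hs =>
    obtain ⟨n, rfl⟩ := hs
    rw [zpw_mul hw hw']
    exact Submodule.subset_span ⟨m + n, rfl⟩
  | zero => rw [mul_zero]; exact zero_mem _
  | add x y hx hy hx' hy' => rw [mul_add]; exact add_mem hx' hy'
  | smul c x hx hx' => rw [mul_smul_comm]; exact Submodule.smul_mem _ _ hx'

lemma span_zpw_mul {w : C} (hw : star w * w = 1) (hw' : w * star w = 1)
    {x y : C} (hx : x ∈ Submodule.span ℂ (Set.range (zpw w)))
    (hy : y ∈ Submodule.span ℂ (Set.range (zpw w))) :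
    x * y ∈ Submodule.span ℂ (Set.range (zpw w)) := by
  induction hx using Submodule.span_induction with
  | mem s hs =>
    obtain ⟨n, rfl⟩ := hs
    exact span_zpw_mul_gen hw hw' n hy
  | zero => rw [zero_mul]; exact zero_mem _
  | add a b ha hb ha' hb' => rw [add_mul]; exact add_mem ha' hb'
  | smul c a ha ha' => rw [smul_mul_assoc]; exact Submodule.smul_mem _ _ ha'

lemma span_zpw_star {w : C}
    {x : C} (hx : x ∈ Submodule.span ℂ (Set.range (zpw w))) :
    star x ∈ Submodule.span ℂ (Set.range (zpw w)) := by
  induction hx using Submodule.span_induction with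
  | mem s hs =>
    obtain ⟨n, rfl⟩ := hs
    rw [star_zpw]
    exact Submodule.subset_span ⟨-n, rfl⟩
  | zero => rw [star_zero]; exact zero_mem _
  | add a b ha hb ha' hb' => rw [star_add]; exact add_mem ha' hb'
  | smul c a ha ha' =>
    rw [star_smul]
    exact Submodule.smul_mem _ _ ha'

lemma adjoin_subset_span_zpw {w : C} (hw : star w * w = 1) (hw' : w * star w = 1)
    {x : C} (hx : x ∈ StarAlgebra.adjoin ℂ ({w} : Set C)) :
    x ∈ Submodule.span ℂ (Set.range (zpw w)) := by
  induction hx using StarAlgebra.adjoin_induction with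
  | mem y hy =>
    rcases hy with rfl
    exact Submodule.subset_span ⟨1, zpw_one _⟩
  | algebraMap r =>
    rw [Algebra.algebraMap_eq_smul_one, ← zpw_zero w]
    exact Submodule.smul_mem _ _ (Submodule.subset_span ⟨0, rfl⟩)
  | add a b ha hb ha' hb' => exact add_mem ha' hb'
  | mul a b ha hb ha' hb' => exact span_zpw_mul hw hw' ha' hb'
  | star a ha ha' => exact span_zpw_star ha'

lemma phi_span_zero (Φ : C →ₗ[ℂ] ℂ) {w : C}
    (hΦ0 : ∀ m : ℤ, m ≠ 0 → Φ (zpw w m) = 0)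
    {z : C} (hz : z ∈ Submodule.span ℂ (zpw w '' {m : ℤ | m ≠ 0})) :
    Φ z = 0 := by
  induction hz using Submodule.span_induction with
  | mem s hs =>
    obtain ⟨m, hm, rfl⟩ := hs
    exact hΦ0 m hm
  | zero => simp
  | add a b ha hb ha' hb' => rw [map_add, ha', hb', add_zero]
  | smul c a ha ha' => rw [map_smul, ha', smul_zero]

lemma mem_span_zpw_ne_zero (Φ : C →ₗ[ℂ] ℂ) {w : C}
    (hΦ0 : ∀ m : ℤ, m ≠ 0 → Φ (zpw w m) = 0) (hΦ1 : Φ 1 = 1)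
    {x : C} (hx : x ∈ Submodule.span ℂ (Set.range (zpw w))) (hc : Φ x = 0) :
    x ∈ Submodule.span ℂ (zpw w '' {m : ℤ | m ≠ 0}) := by
  have hsub : Set.range (zpw w) ⊆ insert (1 : C) (zpw w '' {m : ℤ | m ≠ 0}) := by
    rintro _ ⟨m, rfl⟩
    by_cases hm : m = 0
    · subst hm; rw [zpw_zero]; exact Set.mem_insert _ _
    · exact Set.mem_insert_of_mem _ ⟨m, hm, rfl⟩
  have hx' := Submodule.span_mono hsub hx
  rw [Submodule.mem_span_insert] at hx'
  obtain ⟨c, z, hz, rfl⟩ := hx'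
  have hΦz : Φ z = 0 := phi_span_zero Φ hΦ0 hz
  have hc0 : c = 0 := by
    rw [map_add, map_smul, hΦ1, hΦz, add_zero, smul_eq_mul, mul_one] at hc
    exact hc
  rw [hc0, zero_smul, zero_add]
  exact hz

end ZPow

lemma prod_span_vanish {C : Type*} [Ring C] [Algebra ℂ C] (Φ : C →ₗ[ℂ] ℂ) :
    ∀ (t : ℕ) (x : C) (T : Fin t → Set C) (a : Fin t → C),
      (∀ k, a k ∈ Submodule.span ℂ (T k)) →
      (∀ b : Fin t → C, (∀ k, b k ∈ T k) → Φ (x * (List.ofFn b).prod) = 0) →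
      Φ (x * (List.ofFn a).prod) = 0 := by
  intro t
  induction t with
  | zero =>
    intro x T a _ hb
    exact hb (fun k => k.elim0) (fun k => k.elim0)
  | succ n ih =>
    intro x T a ha hb
    have key : ∀ y, y ∈ Submodule.span ℂ (T 0) →
        Φ ((x * y) * (List.ofFn fun k => a k.succ).prod) = 0 := by
      intro y hy
      induction hy using Submodule.span_induction with
      | mem s hs =>
        refine ih (x * s) (fun k => T k.succ) (fun k => a k.succ)
          (fun k => ha k.succ) ?_
        intro b hbk
        have h2 := hb (Fin.cons s b) ?_
        · rw [List.ofFn_succ, List.prod_cons] at h2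
          simpa [mul_assoc] using h2
        · intro k
          refine Fin.cases ?_ ?_ k
          · simpa using hs
          · intro j; simpa using hbk j
      | zero => simp
      | add p q hp hq hp' hq' =>
        rw [mul_add, add_mul, map_add, hp', hq', add_zero]
      | smul c p hp hp' =>
        rw [mul_smul_comm, smul_mul_assoc, map_smul, hp', smul_zero]
    rw [List.ofFn_succ, List.prod_cons, ← mul_assoc]
    exact key (a 0) (ha 0)

lemma ofFn_prod_tmul {A B : Type*} [Ring A] [Algebra ℂ A] [Ring B] [Algebra ℂ B] :
    ∀ (t : ℕ) (f : Fin t → A) (g : Fin t → B),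
      (List.ofFn fun k => f k ⊗ₜ[ℂ] g k).prod
        = (List.ofFn f).prod ⊗ₜ[ℂ] (List.ofFn g).prod := by
  intro t
  induction t with
  | zero => intro f g; simp [Algebra.TensorProduct.one_def]
  | succ n ih =>
    intro f g
    rw [List.ofFn_succ, List.ofFn_succ (f := f), List.ofFn_succ (f := g),
      List.prod_cons, List.prod_cons, List.prod_cons, ih,
      Algebra.TensorProduct.tmul_mul_tmul]

/-- **Tensor freeness (Lemma `lem: Haar TFC`).**  Let `(A, φ)` and `(B, ψ)` be
*-probability spaces (`φ`, `ψ` unital positive linear functionals).  If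
`u₁,…,u_L ∈ A` is a Haar unitary system and `v₁,…,v_L ∈ B` are unitaries, then
`(u₁⊗v₁, …, u_L⊗v_L)` is a Haar unitary system in `(A ⊗ B, φ ⊗ ψ)`.  (The
star structure of the tensor product, `star (a ⊗ b) = star a ⊗ star b`, is
supplied as a hypothesis.) -/
theorem tensor_haar_unitary_system
    {A B : Type*} [Ring A] [Algebra ℂ A] [StarRing A] [StarModule ℂ A]
    [Ring B] [Algebra ℂ B] [StarRing B] [StarModule ℂ B]
    [StarRing (A ⊗[ℂ] B)] [StarModule ℂ (A ⊗[ℂ] B)]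
    (hstar : ∀ (a : A) (b : B), star (a ⊗ₜ[ℂ] b) = star a ⊗ₜ[ℂ] star b)
    (φ : A →ₗ[ℂ] ℂ) (ψ : B →ₗ[ℂ] ℂ)
    (hφ1 : φ 1 = 1) (hψ1 : ψ 1 = 1)
    (hφpos : ∀ a : A, 0 ≤ φ (a * star a))
    (hψpos : ∀ b : B, 0 ≤ ψ (b * star b))
    {L : ℕ} (u : Fin L → A) (v : Fin L → B)
    (hu : IsHaarUnitarySystem φ u) (hv : ∀ ℓ, IsUnitaryElem (v ℓ)) :
    IsHaarUnitarySystem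
      ((TensorProduct.lid ℂ ℂ).toLinearMap ∘ₗ TensorProduct.map φ ψ)
      (fun ℓ => u ℓ ⊗ₜ[ℂ] v ℓ) := by
  obtain ⟨huH, huF⟩ := hu
  set Φ : (A ⊗[ℂ] B) →ₗ[ℂ] ℂ :=
    (TensorProduct.lid ℂ ℂ).toLinearMap ∘ₗ TensorProduct.map φ ψ with hΦdef
  have hΦtmul : ∀ (a : A) (b : B), Φ (a ⊗ₜ[ℂ] b) = φ a * ψ b := by
    intro a b
    simp [hΦdef, TensorProduct.lid_tmul, smul_eq_mul]
  have hΦ1 : Φ 1 = 1 := by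
    rw [Algebra.TensorProduct.one_def, hΦtmul, hφ1, hψ1, mul_one]
  -- unitarity of the tensors
  have hwu : ∀ ℓ, IsUnitaryElem (u ℓ ⊗ₜ[ℂ] v ℓ) := by
    intro ℓ
    constructor
    · rw [hstar, Algebra.TensorProduct.tmul_mul_tmul, (huH ℓ).1.1, (hv ℓ).1,
        ← Algebra.TensorProduct.one_def]
    · rw [hstar, Algebra.TensorProduct.tmul_mul_tmul, (huH ℓ).1.2, (hv ℓ).2,
        ← Algebra.TensorProduct.one_def]
  -- φ vanishes on nonzero signed powers of u ℓ
  have hφzp : ∀ ℓ (m : ℤ), m ≠ 0 → φ (zpw (u ℓ) m) = 0 := by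
    intro ℓ m hm
    unfold zpw
    split
    · exact ((huH ℓ).2 m.toNat (by omega)).1
    · exact ((huH ℓ).2 (-m).toNat (by omega)).2
  have hzp_tmul : ∀ ℓ (m : ℤ),
      zpw (u ℓ ⊗ₜ[ℂ] v ℓ) m = zpw (u ℓ) m ⊗ₜ[ℂ] zpw (v ℓ) m := by
    intro ℓ m
    unfold zpw
    split
    · exact Algebra.TensorProduct.tmul_pow _ _ _
    · rw [hstar]; exact Algebra.TensorProduct.tmul_pow _ _ _
  have hΦzp : ∀ ℓ (m : ℤ), m ≠ 0 → Φ (zpw (u ℓ ⊗ₜ[ℂ] v ℓ) m) = 0 := by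
    intro ℓ m hm
    rw [hzp_tmul, hΦtmul, hφzp ℓ m hm, zero_mul]
  constructor
  · -- each tensor is a Haar unitary
    intro ℓ
    refine ⟨hwu ℓ, ?_⟩
    intro n hn
    constructor
    · rw [Algebra.TensorProduct.tmul_pow, hΦtmul, ((huH ℓ).2 n hn).1, zero_mul]
    · rw [hstar, Algebra.TensorProduct.tmul_pow, hΦtmul, ((huH ℓ).2 n hn).2,
        zero_mul]
  · -- freeness
    intro t i a ha halt hcent
    set T : Fin t → Set (A ⊗[ℂ] B) :=
      fun k => zpw (u (i k) ⊗ₜ[ℂ] v (i k)) '' {m : ℤ | m ≠ 0} with hTdef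
    have haspan : ∀ k, a k ∈ Submodule.span ℂ (T k) := by
      intro k
      refine mem_span_zpw_ne_zero Φ (fun m hm => hΦzp (i k) m hm) hΦ1
        (adjoin_subset_span_zpw (hwu (i k)).1 (hwu (i k)).2 (ha k)) (hcent k)
    have := prod_span_vanish Φ t 1 T a haspan ?_
    · rwa [one_mul] at this
    · intro b hbT
      have hchoice : ∀ k, ∃ m : ℤ, m ≠ 0 ∧ zpw (u (i k) ⊗ₜ[ℂ] v (i k)) m = b k := by
        intro k
        obtain ⟨m, hm, hmb⟩ := hbT k
        exact ⟨m, hm, hmb⟩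
      choose m hm1 hm2 using hchoice
      have hbeq : (List.ofFn b)
          = List.ofFn (fun k => zpw (u (i k)) (m k) ⊗ₜ[ℂ] zpw (v (i k)) (m k)) := by
        congr 1
        funext k
        rw [← hm2 k, hzp_tmul]
      rw [one_mul, hbeq, ofFn_prod_tmul, hΦtmul]
      have hφ0 : φ (List.ofFn fun k => zpw (u (i k)) (m k)).prod = 0 := by
        refine huF t i (fun k => zpw (u (i k)) (m k)) ?_ halt ?_
        · intro k; exact zpw_mem_adjoin _ _
        · intro k; exact hφzp (i k) (m k) (hm1 k)
      rw [hφ0, zero_mul]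
end

section
/- If π′ ≤ π in the partition lattice P(2K), then 𝔏(T₀^π) ≤ 𝔏(T₀^{π′}), where 𝔏(T) denotes the number of leaves of the forest of two-edge connected components of T (with an isolated two-edge connected component counted as two leaves). -/
open scoped Classical

/-- A multigraph with edges indexed by `ι`; the `k`-th edge goes from
`(ends k).1` (source) to `(ends k).2` (target).  A *linear graph of order `K`*
in the sense of the paper is an `MGraph (Fin K)`. -/
structure MGraph (ι : Type) where
  V : Type
  [fintV : Fintype V]
  [decV : DecidableEq V]
  ends : ι → V × V

attribute [instance] MGraph.fintV MGraph.decV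

namespace MGraph

variable {ι : Type} [Fintype ι] [DecidableEq ι]

/-- Adjacency using only the edges in `s` (undirected). -/
def adjOn (G : MGraph ι) (s : Set ι) (v w : G.V) : Prop :=
  ∃ e ∈ s, G.ends e = (v, w) ∨ G.ends e = (w, v)

/-- Connectivity (as a setoid) of the subgraph with edge set `s`. -/
def reachSetoid (G : MGraph ι) (s : Set ι) : Setoid G.V :=
  ⟨Relation.EqvGen (G.adjOn s), Relation.EqvGen.is_equivalence _⟩

/-- Number of connected components of the subgraph with edge set `s`
(on the full vertex set). -/
noncomputable def ncomp (G : MGraph ι) (s : Set ι) : ℕ :=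
  Fintype.card (Quotient (G.reachSetoid s))

/-- A cutting edge (bridge): removing it increases the number of connected
components. -/
def IsBridge (G : MGraph ι) (e : ι) : Prop :=
  G.ncomp Set.univ < G.ncomp {x | x ≠ e}

/-- Two vertices are in the same two-edge connected component iff they are
connected using no cutting edge. -/
def tecSetoid (G : MGraph ι) : Setoid G.V := G.reachSetoid {e | ¬ G.IsBridge e}

/-- The forest of two-edge connected components: vertices are the two-edge
connected components, edges are the cutting edges. -/
noncomputable def forest (G : MGraph ι) : MGraph {e : ι // G.IsBridge e} where
  V := Quotient G.tecSetoid
  ends := fun e => (Quotient.mk _ (G.ends e.1).1, Quotient.mk _ (G.ends e.1).2)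

/-- Degree of a vertex (loops counted twice). -/
noncomputable def deg (G : MGraph ι) (v : G.V) : ℕ :=
  (Finset.univ.filter (fun e : ι => (G.ends e).1 = v)).card
  + (Finset.univ.filter (fun e : ι => (G.ends e).2 = v)).card

/-- Number of leaves, with the convention that an isolated vertex counts as
two leaves. -/
noncomputable def leafCount (G : MGraph ι) : ℕ :=
  ∑ v : G.V, if G.deg v = 0 then 2 else if G.deg v = 1 then 1 else 0

/-- `𝔏(G)`: the number of leaves of the forest of two-edge connected
components of `G` (an isolated two-edge connected component counts twice). -/
noncomputable def LL (G : MGraph ι) : ℕ := G.forest.leafCount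

/-- The quotient graph of `G` by a partition (setoid) of its vertex set. -/
noncomputable def quot (G : MGraph ι) (s : Setoid G.V) : MGraph ι where
  V := Quotient s
  ends := fun e => (Quotient.mk s (G.ends e).1, Quotient.mk s (G.ends e).2)

end MGraph

/-- The minimal linear graph `T₀` of order `K`: vertex set `[2K]` is encoded as
`Fin K ⊕ Fin K` (targets `1,…,K` on the left, sources `K+1,…,2K` on the
right), the `k`-th edge going from `K+k` to `k`. -/
def T0 (K : ℕ) : MGraph (Fin K) where
  V := Fin K ⊕ Fin K
  ends := fun k => (Sum.inr k, Sum.inl k)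

namespace MGraph

/-- The elementary linear form `Tr_{N,T}` of a linear graph `T` of order `K`,
evaluated on the elementary tensor `A₁ ⊗ ⋯ ⊗ A_K`. -/
noncomputable def gTrace {K : ℕ} (G : MGraph (Fin K)) (N : ℕ)
    (A : Fin K → Matrix (Fin N) (Fin N) ℂ) : ℂ :=
  ∑ φ : G.V → Fin N, ∏ k : Fin K, A k (φ (G.ends k).2) (φ (G.ends k).1)

/-- The injective linear form `Tr⁰_{N,T}`: only injective maps `φ : V → [N]`
are summed. -/
noncomputable def gTrace0 {K : ℕ} (G : MGraph (Fin K)) (N : ℕ)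
    (A : Fin K → Matrix (Fin N) (Fin N) ℂ) : ℂ :=
  ∑ φ : G.V → Fin N,
    if Function.Injective φ then ∏ k : Fin K, A k (φ (G.ends k).2) (φ (G.ends k).1) else 0

end MGraph

/-- All partitions of a finite set, as setoids. -/
noncomputable instance setoidFintype (V : Type*) [Fintype V] [DecidableEq V] :
    Fintype (Setoid V) :=
  Fintype.ofSurjective (fun g : V → V => Setoid.ker g)
    (fun s => ⟨fun v => (Quotient.mk s v).out, Setoid.ext fun x y => by
      constructor
      · intro h
        have h2 : Quotient.mk s x = Quotient.mk s y := by
          have hx := Quotient.out_eq (Quotient.mk s x)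
          have hy := Quotient.out_eq (Quotient.mk s y)
          rw [← hx, ← hy]
          exact congrArg (Quotient.mk s) h
        exact Quotient.exact h2
      · intro h
        show (Quotient.mk s x).out = (Quotient.mk s y).out
        rw [Quotient.sound h]⟩)

/-!
Coarsening `π'` to `π` is a surjective map `f` from the vertices of `T₀^{π'}` onto those of
`T₀^π` that carries every edge to the edge with the same label.  Paths avoiding an edge map to
paths avoiding it, so a bridge of the image is a bridge of the source, and `f` descends to a
surjection `F` between the vertex sets of the two forests of two-edge connected components.
Fix a component `u` of the target and let `S = F⁻¹(u)`.  The bridges of the source with both ends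
in `S` form a subforest, so there are `i ≤ #S - 1` of them, and they are exactly the bridges that
become loops at `u`; hence `∑_{v ∈ S} deg v = 2 i + deg u`.  Since the leaf weight of a vertex of
degree `d` is `2 - d` (truncated), `∑_{v ∈ S} (2 - deg v) ≥ 2 #S - 2 i - deg u ≥ 2 - deg u`, and
summing over `u` gives the inequality.
-/

open Finset

namespace Setoid

variable {α : Type*} [Fintype α] {r s : Setoid α}

theorem card_quotient_le_of_le (h : r ≤ s) :
    Fintype.card (Quotient s) ≤ Fintype.card (Quotient r) :=
  Fintype.card_le_of_surjective _ (Quotient.map_surjective h Function.surjective_id)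

theorem card_quotient_lt_of_le {a b : α} (h : r ≤ s) (hs : s a b) (hr : ¬ r a b) :
    Fintype.card (Quotient s) < Fintype.card (Quotient r) :=
  Fintype.card_lt_of_surjective_not_injective _ (Quotient.map_surjective h Function.surjective_id)
    fun hinj => hr (Quotient.exact (hinj (Quotient.sound hs)))

end Setoid

section Counting

variable {ι : Type*} [Fintype ι]

theorem card_filter_eq_add {p q r : ι → Prop} [DecidablePred p] [DecidablePred q]
    [DecidablePred r] (h : ∀ e, p e ↔ q e ∨ r e) (hqr : ∀ e, q e → ¬ r e) :
    #{e | p e} = #{e | q e} + #{e | r e} := by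
  rw [← card_union_of_disjoint (disjoint_filter.2 fun e _ => hqr e), ← filter_or]
  exact congrArg card (filter_congr fun e _ => h e)

theorem sum_card_filter_fiber {α β : Type*} [Fintype α] [DecidableEq α] [DecidableEq β]
    (p : ι → Prop) [DecidablePred p] (g : ι → α) (f : α → β) (u : β) :
    ∑ v with f v = u, #{e | p e ∧ g e = v} = #{e | p e ∧ f (g e) = u} := by
  rw [card_eq_sum_card_fiberwise (f := g) (t := {v | f v = u}) fun e he => by
    simpa using (mem_filter.1 he).2.2]
  refine sum_congr rfl fun v hv => congrArg card ?_
  rw [filter_filter, ← (mem_filter.1 hv).2]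
  exact filter_congr fun e _ =>
    ⟨fun ⟨hp, hg⟩ => ⟨⟨hp, hg ▸ rfl⟩, hg⟩, fun ⟨⟨hp, _⟩, hg⟩ => ⟨hp, hg⟩⟩

end Counting

theorem two_tsub_le_sum_two_tsub {α : Type*} {S : Finset α} {d : α → ℕ} {D : ℕ}
    (h : 2 + ∑ v ∈ S, d v ≤ 2 * #S + D) : 2 - D ≤ ∑ v ∈ S, (2 - d v) := by
  have hpoint : 2 * #S ≤ ∑ v ∈ S, (2 - d v) + ∑ v ∈ S, d v := by
    rw [← sum_add_distrib, mul_comm, ← smul_eq_mul, ← sum_const]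
    exact sum_le_sum fun v _ => by omega
  omega

namespace MGraph

variable {ι : Type}

section Connectivity

variable {G : MGraph ι} {s t : Set ι}

theorem reachSetoid_le_iff {r : Setoid G.V} :
    G.reachSetoid s ≤ r ↔ ∀ e ∈ s, r (G.ends e).1 (G.ends e).2 := by
  refine ⟨fun h e he => h (Relation.EqvGen.rel _ _ ⟨e, he, .inl rfl⟩), fun h => ?_⟩
  refine Setoid.eqvGen_le fun v w ⟨e, he, hvw⟩ => ?_
  have hr := h e he
  rcases hvw with hvw | hvw <;> rw [hvw] at hr
  exacts [hr, r.symm hr]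

theorem reachSetoid_ends {e : ι} (he : e ∈ s) : G.reachSetoid s (G.ends e).1 (G.ends e).2 :=
  reachSetoid_le_iff.1 le_rfl e he

theorem reachSetoid_mono (hst : s ⊆ t) : G.reachSetoid s ≤ G.reachSetoid t :=
  reachSetoid_le_iff.2 fun _ he => reachSetoid_ends (hst he)

theorem ncomp_lt_of_subset {a b : G.V} (hst : s ⊆ t) (ht : G.reachSetoid t a b)
    (hs : ¬ G.reachSetoid s a b) : G.ncomp t < G.ncomp s :=
  Setoid.card_quotient_lt_of_le (reachSetoid_mono hst) ht hs

theorem isBridge_iff_not_reachSetoid {e : ι} :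
    G.IsBridge e ↔ ¬ G.reachSetoid {x | x ≠ e} (G.ends e).1 (G.ends e).2 := by
  refine ⟨fun hb hr => hb.not_ge (Setoid.card_quotient_le_of_le ?_), fun hr =>
    ncomp_lt_of_subset (Set.subset_univ _) (reachSetoid_ends (Set.mem_univ e)) hr⟩
  refine reachSetoid_le_iff.2 fun x _ => ?_
  rcases eq_or_ne x e with rfl | hx
  exacts [hr, reachSetoid_ends hx]

theorem ncomp_lt_ncomp_diff_singleton {e : ι} (he : e ∈ t) (hb : G.IsBridge e) :
    G.ncomp t < G.ncomp (t \ {e}) :=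
  ncomp_lt_of_subset Set.sdiff_subset (reachSetoid_ends he) fun hr =>
    isBridge_iff_not_reachSetoid.1 hb (reachSetoid_mono (fun _ hx => hx.2) hr)

theorem ncomp_add_card_le_ncomp_diff (D : Finset ι) (hD : ∀ e ∈ D, G.IsBridge e)
    (hDt : ↑D ⊆ t) : G.ncomp t + #D ≤ G.ncomp (t \ ↑D) := by
  induction D using Finset.induction_on generalizing t with
  | empty => simp
  | @insert e D he ih =>
    have hD' := ih (fun x hx => hD x (mem_insert_of_mem hx))
      ((Finset.coe_subset.2 (subset_insert e D)).trans hDt)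
    have he' : e ∈ t \ ↑D := ⟨hDt (by simp), by simpa using he⟩
    have hlt := ncomp_lt_ncomp_diff_singleton he' (hD e (mem_insert_self e D))
    rw [Set.sdiff_sdiff, Set.union_comm, ← Set.insert_eq, ← Finset.coe_insert] at hlt
    rw [card_insert_of_notMem he]
    omega

theorem isBridge_iff_mk_ne {e : ι} :
    G.IsBridge e ↔ (⟦(G.ends e).1⟧ : Quotient G.tecSetoid) ≠ ⟦(G.ends e).2⟧ := by
  refine ⟨fun hb heq => isBridge_iff_not_reachSetoid.1 hb
    (reachSetoid_mono ?_ (Quotient.exact heq)),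
    fun hne => not_not.1 fun hb => hne (Quotient.sound (reachSetoid_ends hb))⟩
  rintro x hx rfl
  exact hx hb

theorem card_compl_add_one_le_ncomp {S : Finset (Quotient G.tecSetoid)} (hS : S.Nonempty)
    (ht : ∀ e ∈ t, ¬ G.IsBridge e ∨ (⟦(G.ends e).1⟧ ∈ S ∧ ⟦(G.ends e).2⟧ ∈ S)) :
    #Sᶜ + 1 ≤ G.ncomp t := by
  let collapse : G.V → Option (Quotient G.tecSetoid) := fun x => if ⟦x⟧ ∈ S then none else some ⟦x⟧
  have hle : G.reachSetoid t ≤ Setoid.ker collapse := reachSetoid_le_iff.2 fun e he => by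
    rcases ht e he with hb | ⟨h1, h2⟩
    · simp only [Setoid.ker_def, collapse, not_ne_iff.1 (isBridge_iff_mk_ne.not.1 hb)]
    · simp only [Setoid.ker_def, collapse, h1, h2, if_true]
  have hsurj : Set.SurjOn (Quotient.lift collapse fun _ _ hab => hle hab)
      ↑(univ : Finset (Quotient (G.reachSetoid t)))
      ↑(insert none (Sᶜ.map Function.Embedding.some)) := by
    intro y hy
    simp only [coe_insert, coe_map, Set.mem_insert_iff, Set.mem_image, mem_coe, mem_compl] at hy
    rcases hy with rfl | ⟨c, hc, rfl⟩
    · obtain ⟨c, hc⟩ := hS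
      obtain ⟨x, rfl⟩ := Quotient.mk_surjective c
      exact ⟨⟦x⟧, mem_coe.2 (mem_univ _), if_pos hc⟩
    · obtain ⟨x, rfl⟩ := Quotient.mk_surjective c
      exact ⟨⟦x⟧, mem_coe.2 (mem_univ _), if_neg hc⟩
  calc #Sᶜ + 1 = #(insert none (Sᶜ.map Function.Embedding.some)) := by
        rw [card_insert_of_notMem (by simp), card_map]
    _ ≤ #(univ : Finset (Quotient (G.reachSetoid t))) := card_le_card_of_surjOn _ hsurj
    _ = G.ncomp t := card_univ

end Connectivity

section Contraction

variable {A B : MGraph ι} {f : A.V → B.V}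

theorem reachSetoid_map (hends : ∀ e, B.ends e = Prod.map f f (A.ends e)) {s : Set ι}
    {a b : A.V} (h : A.reachSetoid s a b) : B.reachSetoid s (f a) (f b) :=
  (reachSetoid_le_iff (r := (B.reachSetoid s).comap f)).2
    (fun e he => by simpa [hends, Setoid.comap_rel] using reachSetoid_ends (G := B) he) h

theorem isBridge_of_isBridge_map (hends : ∀ e, B.ends e = Prod.map f f (A.ends e)) {e : ι}
    (hb : B.IsBridge e) : A.IsBridge e :=
  isBridge_iff_not_reachSetoid.2 fun hr =>
    isBridge_iff_not_reachSetoid.1 hb (by simpa [hends] using reachSetoid_map hends hr)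

theorem tecSetoid_map (hends : ∀ e, B.ends e = Prod.map f f (A.ends e)) {a b : A.V}
    (h : A.tecSetoid a b) : B.tecSetoid (f a) (f b) :=
  reachSetoid_mono
    (Set.ofPred_subset_ofPred.2 fun _ hA hB => hA (isBridge_of_isBridge_map hends hB))
    (reachSetoid_map hends h)

end Contraction

variable [Fintype ι]

-- The edge-count characterisation of forests, for the graph with its loops deleted.
def IsForestUpToLoops (G : MGraph ι) : Prop :=
  ∀ S : Finset G.V, S.Nonempty →
    #{e | (G.ends e).1 ≠ (G.ends e).2 ∧ (G.ends e).1 ∈ S ∧ (G.ends e).2 ∈ S} + 1 ≤ #S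

theorem isForestUpToLoops_quot_tecSetoid (G : MGraph ι) :
    (G.quot G.tecSetoid).IsForestUpToLoops := by
  intro S hS
  let C := G.quot G.tecSetoid
  let D : Finset ι := {e | (C.ends e).1 ≠ (C.ends e).2 ∧ (C.ends e).1 ∈ S ∧ (C.ends e).2 ∈ S}
  let nonBridges : Set ι := {e | ¬ G.IsBridge e}
  have hD : ∀ e ∈ D, G.IsBridge e := fun e he => isBridge_iff_mk_ne.2 (mem_filter.1 he).2.1
  have hdiff : (nonBridges ∪ ↑D) \ ↑D = nonBridges :=
    Set.union_sdiff_cancel_right fun e ⟨hnb, heD⟩ => hnb (hD e heD)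
  have hlower : #Sᶜ + 1 ≤ G.ncomp (nonBridges ∪ ↑D) :=
    card_compl_add_one_le_ncomp hS fun e he => he.imp id fun heD => (mem_filter.1 heD).2.2
  have hcount : #Sᶜ + 1 + #D ≤ #S + #Sᶜ :=
    calc #Sᶜ + 1 + #D ≤ G.ncomp (nonBridges ∪ ↑D) + #D := by omega
      _ ≤ G.ncomp ((nonBridges ∪ ↑D) \ ↑D) :=
        ncomp_add_card_le_ncomp_diff D hD Set.subset_union_right
      _ = G.ncomp nonBridges := by rw [hdiff]
      _ = #S + #Sᶜ := (card_add_card_compl S).symm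
  show #D + 1 ≤ #S
  omega

noncomputable def looplessDeg (G : MGraph ι) (v : G.V) : ℕ :=
  #{e | (G.ends e).1 ≠ (G.ends e).2 ∧ (G.ends e).1 = v} +
    #{e | (G.ends e).1 ≠ (G.ends e).2 ∧ (G.ends e).2 = v}

theorem deg_forest (G : MGraph ι) (v : Quotient G.tecSetoid) :
    G.forest.deg v = (G.quot G.tecSetoid).looplessDeg v := by
  have hcard (endpoint : Quotient G.tecSetoid × Quotient G.tecSetoid → Quotient G.tecSetoid) :
      #{e : {e // G.IsBridge e} | endpoint (G.forest.ends e) = v} =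
        #{e | ((G.quot G.tecSetoid).ends e).1 ≠ ((G.quot G.tecSetoid).ends e).2 ∧
          endpoint ((G.quot G.tecSetoid).ends e) = v} := by
    refine card_bij (fun e _ => e.1) (fun e he => ?_) (fun _ _ _ _ => Subtype.ext) fun e he => ?_
    · simp only [mem_filter, mem_univ, true_and] at he ⊢
      exact ⟨isBridge_iff_mk_ne.1 e.2, he⟩
    · simp only [mem_filter, mem_univ, true_and] at he ⊢
      exact ⟨⟨e, isBridge_iff_mk_ne.2 he.1⟩, he.2, rfl⟩
  exact congrArg₂ (· + ·) (hcard Prod.fst) (hcard Prod.snd)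

-- A non-loop edge of `A` inside the fibre is counted twice on the left and becomes a loop of `B`.
theorem sum_looplessDeg_fiber {A B : MGraph ι} {f : A.V → B.V}
    (hends : ∀ e, B.ends e = Prod.map f f (A.ends e)) (u : B.V) :
    ∑ v with f v = u, A.looplessDeg v =
      2 * #{e | (A.ends e).1 ≠ (A.ends e).2 ∧ f (A.ends e).1 = u ∧ f (A.ends e).2 = u} +
        B.looplessDeg u := by
  have h1 : #{e | (A.ends e).1 ≠ (A.ends e).2 ∧ f (A.ends e).1 = u} =
      #{e | (A.ends e).1 ≠ (A.ends e).2 ∧ f (A.ends e).1 = u ∧ f (A.ends e).2 = u} +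
        #{e | f (A.ends e).1 ≠ f (A.ends e).2 ∧ f (A.ends e).1 = u} := by
    refine card_filter_eq_add (fun e => ?_) fun e => ?_ <;> grind
  have h2 : #{e | (A.ends e).1 ≠ (A.ends e).2 ∧ f (A.ends e).2 = u} =
      #{e | (A.ends e).1 ≠ (A.ends e).2 ∧ f (A.ends e).1 = u ∧ f (A.ends e).2 = u} +
        #{e | f (A.ends e).1 ≠ f (A.ends e).2 ∧ f (A.ends e).2 = u} := by
    refine card_filter_eq_add (fun e => ?_) fun e => ?_ <;> grind
  simp only [looplessDeg, sum_add_distrib, sum_card_filter_fiber, hends, Prod.map_fst,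
    Prod.map_snd, h1, h2]
  ring

theorem sum_two_tsub_looplessDeg_le {A B : MGraph ι} (hA : A.IsForestUpToLoops)
    {f : A.V → B.V} (hf : Function.Surjective f)
    (hends : ∀ e, B.ends e = Prod.map f f (A.ends e)) :
    ∑ u, (2 - B.looplessDeg u) ≤ ∑ v, (2 - A.looplessDeg v) := by
  rw [← sum_fiberwise univ f]
  refine sum_le_sum fun u _ => two_tsub_le_sum_two_tsub ?_
  obtain ⟨v, rfl⟩ := hf u
  have hfiber := hA {w | f w = f v} ⟨v, by simp⟩
  simp only [mem_filter, mem_univ, true_and] at hfiber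
  rw [sum_looplessDeg_fiber hends]
  omega

theorem leafCount_eq_sum_two_tsub (G : MGraph ι) : G.leafCount = ∑ v, (2 - G.deg v) :=
  sum_congr rfl fun v _ => by split_ifs <;> omega

theorem LL_eq_sum_two_tsub_looplessDeg (G : MGraph ι) :
    G.LL = ∑ v, (2 - (G.quot G.tecSetoid).looplessDeg v) := by
  rw [LL, leafCount_eq_sum_two_tsub]
  exact Fintype.sum_equiv (Equiv.refl _) _ _ fun v => congrArg (2 - ·) (deg_forest G v)

theorem LL_le_of_surjective {A B : MGraph ι} {f : A.V → B.V} (hf : Function.Surjective f)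
    (hends : ∀ e, B.ends e = Prod.map f f (A.ends e)) : B.LL ≤ A.LL := by
  let F : (A.quot A.tecSetoid).V → (B.quot B.tecSetoid).V :=
    Quotient.map f fun _ _ => tecSetoid_map hends
  have hF : Function.Surjective F := Quotient.map_surjective _ hf
  have hFends (e : ι) :
      (B.quot B.tecSetoid).ends e = Prod.map F F ((A.quot A.tecSetoid).ends e) := by
    simp only [quot, hends e]
    rfl
  rw [LL_eq_sum_two_tsub_looplessDeg, LL_eq_sum_two_tsub_looplessDeg]
  exact sum_two_tsub_looplessDeg_le A.isForestUpToLoops_quot_tecSetoid hF hFends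

end MGraph

/-- If `π′ ≤ π` in the partition lattice `P(2K)` (refinement order), then
`𝔏(T₀^π) ≤ 𝔏(T₀^{π′})`, where `𝔏` is the number of leaves of the forest of
two-edge connected components. -/
theorem leaves_antitone_of_refinement (K : ℕ)
    (π π' : Setoid ((T0 K).V)) (h : π' ≤ π) :
    ((T0 K).quot π).LL ≤ ((T0 K).quot π').LL :=
  MGraph.LL_le_of_surjective (Quotient.map_surjective h Function.surjective_id) fun _ => rfl
end

section
/- Let σ be a noncrossing partition of {1,…,n} and let u₁,…,u_n be unitaries in a *-algebra such that along each block of σ (read in increasing order) the product of the corresponding unitaries reduces to 1 via the alternating pattern u u* u u* … (each block has even size and the product over each block equals 1, with inner blocks forming contiguous subproducts after removal of deeper blocks). Then the full product u₁u₂⋯u_n equals 1. -/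
/-!
Induct over σ-saturated sets `S`, i.e. unions of blocks. A block of `S` whose hull (the elements
between its least and greatest element) is smallest is innermost: by noncrossingness, any other
block entering that hull would have a strictly smaller hull. So the block is a contiguous
segment of the sorted list of `S`, its alternating product `v v* v v* ⋯` is `1`, and cutting it
out leaves the product over a smaller saturated set.
-/

open scoped Classical

open Finset

theorem List.prod_eq_one_of_alternating {M : Type*} [Monoid M] {v w : M} (hvw : v * w = 1) :
    ∀ {l : List M}, l.length % 2 = 0 →
      (∀ (k : ℕ) (hk : k < l.length), l[k] = if k % 2 = 0 then v else w) → l.prod = 1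
  | [], _, _ => rfl
  | [_], hlen, _ => by simp at hlen
  | a :: b :: l, hlen, hl => by
    have ha := hl 0 (by simp)
    have hb := hl 1 (by simp)
    simp only [getElem_cons_zero, getElem_cons_succ, Nat.zero_mod, Nat.one_mod, if_pos,
      one_ne_zero, if_false] at ha hb
    have hrest : l.prod = 1 := by
      refine prod_eq_one_of_alternating hvw (by simp at hlen; omega) fun k hk => ?_
      have hk2 := hl (k + 2) (by simpa using hk)
      simpa [Nat.add_mod] using hk2
    rw [prod_cons, prod_cons, hrest, ha, hb, mul_one, hvw]

namespace Finset

variable {α : Type*} [LinearOrder α]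

theorem sort_union_of_forall_lt {s t : Finset α} (h : ∀ x ∈ s, ∀ y ∈ t, x < y) :
    (s ∪ t).sort = s.sort ++ t.sort := by
  have hlt : (s.sort ++ t.sort).Pairwise (· < ·) :=
    List.pairwise_append.2 ⟨(sortedLT_sort s).pairwise, (sortedLT_sort t).pairwise,
      by simpa using h⟩
  rw [show s ∪ t = (s.sort ++ t.sort).toFinset by ext; simp]
  exact (List.toFinset_sort _ hlt.nodup).2 (hlt.imp le_of_lt)

theorem exists_sort_eq_append_sort {s t : Finset α} (ht : t.Nonempty) (hts : t ⊆ s)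
    (hconv : ∀ x ∈ s, ∀ a ∈ t, ∀ b ∈ t, a ≤ x → x ≤ b → x ∈ t) :
    ∃ l₁ l₂ : List α, s.sort = l₁ ++ t.sort ++ l₂ ∧ (s \ t).sort = l₁ ++ l₂ := by
  set P := s.filter fun x => ∀ a ∈ t, x < a
  set Q := s.filter fun x => ∀ a ∈ t, a < x
  have hPt : ∀ x ∈ P, ∀ y ∈ t, x < y := fun x hx => (mem_filter.1 hx).2
  have htQ : ∀ x ∈ t, ∀ y ∈ Q, x < y := fun x hx y hy => (mem_filter.1 hy).2 x hx
  have hPQ : ∀ x ∈ P, ∀ y ∈ Q, x < y := by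
    obtain ⟨c, hc⟩ := ht
    exact fun x hx y hy => (hPt x hx c hc).trans (htQ c hc y hy)
  have htrichotomy : ∀ x ∈ s, x ∈ P ∨ x ∈ t ∨ x ∈ Q := by
    intro x hx
    by_contra! h
    obtain ⟨⟨a, ha, hax⟩, hxt, ⟨b, hb, hxb⟩⟩ :
        (∃ a ∈ t, a ≤ x) ∧ x ∉ t ∧ ∃ b ∈ t, x ≤ b := by
      simpa [P, Q, hx] using h
    exact hxt (hconv x hx a ha b hb hax hxb)
  have hs : s = P ∪ t ∪ Q := by
    ext x
    refine ⟨fun hx => by simpa [or_assoc] using htrichotomy x hx, ?_⟩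
    simp only [mem_union]
    rintro ((hx | hx) | hx)
    exacts [filter_subset _ _ hx, hts hx, filter_subset _ _ hx]
  have hst : s \ t = P ∪ Q := by
    ext x
    simp only [mem_sdiff, mem_union]
    refine ⟨fun ⟨hxs, hxt⟩ => by simpa [hxt] using htrichotomy x hxs, ?_⟩
    rintro (hx | hx)
    · exact ⟨filter_subset _ _ hx, fun h => lt_irrefl x (hPt x hx x h)⟩
    · exact ⟨filter_subset _ _ hx, fun h => lt_irrefl x (htQ x h x hx)⟩
  refine ⟨P.sort, Q.sort, ?_, ?_⟩
  · rw [hs, sort_union_of_forall_lt, sort_union_of_forall_lt hPt]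
    intro x hx y hy
    rcases mem_union.1 hx with hx | hx
    exacts [hPQ x hx y hy, htQ x hx y hy]
  · rw [hst, sort_union_of_forall_lt hPQ]

end Finset

namespace Setoid

section Block

variable {α : Type*} [Fintype α] {σ : Setoid α}

noncomputable def block (σ : Setoid α) (i : α) : Finset α := univ.filter fun j => σ.r i j

@[simp]
theorem mem_block {i j : α} : j ∈ σ.block i ↔ σ.r i j := by simp [block]

theorem block_nonempty (i : α) : (σ.block i).Nonempty := ⟨i, mem_block.2 (σ.refl' i)⟩

end Block

section Noncrossing

variable {α : Type*} [LinearOrder α]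

def IsNoncrossing (σ : Setoid α) : Prop :=
  ∀ ⦃i ii j jj : α⦄, i < ii → ii < j → j < jj → σ.r i j → σ.r ii jj → σ.r i ii

theorem IsNoncrossing.lt_and_lt_of_rel {σ : Setoid α} (hnc : σ.IsNoncrossing) {a b x y : α}
    (hab : σ.r a b) (hax : a < x) (hxb : x < b) (hxa : ¬ σ.r a x) (hxy : σ.r x y) :
    a < y ∧ y < b := by
  constructor
  · by_contra! hya
    rcases hya.lt_or_eq with hya | rfl
    · exact hxa (σ.trans' (σ.symm' (hnc hya hax hxb (σ.symm' hxy) hab)) (σ.symm' hxy))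
    · exact hxa (σ.symm' hxy)
  · by_contra! hby
    rcases hby.lt_or_eq with hby | rfl
    · exact hxa (hnc hax hxb hby hab hxy)
    · exact hxa (σ.trans' hab (σ.symm' hxy))

end Noncrossing

variable {α : Type*} [LinearOrder α] [Fintype α] {σ : Setoid α}

noncomputable def hull (σ : Setoid α) (i : α) : Finset α :=
  univ.filter fun x => ∃ a b, σ.r i a ∧ σ.r i b ∧ a ≤ x ∧ x ≤ b

theorem mem_hull {i x : α} :
    x ∈ σ.hull i ↔ ∃ a b, σ.r i a ∧ σ.r i b ∧ a ≤ x ∧ x ≤ b := by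
  simp only [hull, mem_filter, mem_univ, true_and]

theorem mem_hull_of_rel {i a : α} (h : σ.r i a) : a ∈ σ.hull i :=
  mem_hull.2 ⟨a, a, h, h, le_rfl, le_rfl⟩

theorem IsNoncrossing.hull_ssubset_hull (hnc : σ.IsNoncrossing) {i x : α} (hx : x ∈ σ.hull i)
    (hix : ¬ σ.r i x) : σ.hull x ⊂ σ.hull i := by
  obtain ⟨a, b, hia, hib, hax, hxb⟩ := mem_hull.1 hx
  have hax' : a < x := hax.lt_of_ne fun h => hix (h ▸ hia)
  have hxb' : x < b := hxb.lt_of_ne fun h => hix (h ▸ hib)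
  have hnest : ∀ y, σ.r x y → a < y ∧ y < b := fun y =>
    hnc.lt_and_lt_of_rel (σ.trans' (σ.symm' hia) hib) hax' hxb'
      fun h => hix (σ.trans' hia h)
  refine (ssubset_iff_of_subset ?_).2 ⟨a, mem_hull_of_rel hia, fun ha => ?_⟩
  · intro z hz
    obtain ⟨c, d, hxc, hxd, hcz, hzd⟩ := mem_hull.1 hz
    exact mem_hull.2
      ⟨a, b, hia, hib, (hnest c hxc).1.le.trans hcz, hzd.trans (hnest d hxd).2.le⟩
  · obtain ⟨c, -, hxc, -, hca, -⟩ := mem_hull.1 ha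
    exact (hnest c hxc).1.not_ge hca

theorem IsNoncrossing.exists_innermost (hnc : σ.IsNoncrossing) {S : Finset α}
    (hS : S.Nonempty) : ∃ i ∈ S, ∀ x ∈ S, x ∈ σ.hull i → σ.r i x := by
  obtain ⟨i, hi, hmin⟩ := S.exists_min_image (fun i => (σ.hull i).card) hS
  refine ⟨i, hi, fun x hx hxi => ?_⟩
  by_contra hix
  exact (hmin x hx).not_gt (card_lt_card (hnc.hull_ssubset_hull hxi hix))

theorem IsNoncrossing.prod_map_sort_eq_one {M : Type*} [Monoid M] (hnc : σ.IsNoncrossing)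
    {u : α → M} (hblock : ∀ i, ((σ.block i).sort.map u).prod = 1) (S : Finset α)
    (hS : ∀ i ∈ S, ∀ j, σ.r i j → j ∈ S) : (S.sort.map u).prod = 1 := by
  induction S using Finset.strongInduction with
  | H S ih =>
    rcases S.eq_empty_or_nonempty with rfl | hne
    · simp
    obtain ⟨i, hi, hinner⟩ := hnc.exists_innermost hne
    have hsub : σ.block i ⊆ S := fun j hj => hS i hi j (mem_block.1 hj)
    obtain ⟨l₁, l₂, hsort, hsort'⟩ := exists_sort_eq_append_sort (block_nonempty i) hsub
      fun x hx a ha b hb hax hxb => mem_block.2 <| hinner x hx <|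
        mem_hull.2 ⟨a, b, mem_block.1 ha, mem_block.1 hb, hax, hxb⟩
    have hrest : ((S \ σ.block i).sort.map u).prod = 1 := by
      refine ih _ (sdiff_ssubset hsub (block_nonempty i)) fun x hx j hxj => ?_
      obtain ⟨hxS, hxi⟩ := mem_sdiff.1 hx
      exact mem_sdiff.2 ⟨hS x hxS j hxj,
        fun hj => hxi (mem_block.2 (σ.trans' (mem_block.1 hj) (σ.symm' hxj)))⟩
    rw [hsort', List.map_append, List.prod_append] at hrest
    rw [hsort, List.map_append, List.map_append, List.prod_append, List.prod_append, hblock i,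
      mul_one, hrest]

end Setoid

/-- Let `σ` be a noncrossing partition of `{1,…,n}` and `u₁,…,u_n` unitaries in
a *-monoid such that along each block of `σ`, read in increasing order, the
entries follow the alternating pattern `v, v*, v, v*, …` for a single unitary
`v` (in particular each block has even size).  Then `u₁ u₂ ⋯ u_n = 1`. -/
theorem prod_eq_one_of_noncrossing_alternating
    {A : Type*} [Monoid A] [StarMul A] (n : ℕ) (σ : Setoid (Fin n))
    (u : Fin n → A)
    (hnc : ¬ ∃ i ii j jj : Fin n, i < ii ∧ ii < j ∧ j < jj ∧
      σ.r i j ∧ σ.r ii jj ∧ ¬ σ.r i ii)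
    (hblocks : ∀ i : Fin n, ∃ v : A,
      star v * v = 1 ∧ v * star v = 1 ∧
      (let l := (Finset.univ.filter (fun j => σ.r i j)).sort (· ≤ ·)
       l.length % 2 = 0 ∧
         ∀ (k : ℕ) (hk : k < l.length),
           u (l.get ⟨k, hk⟩) = if k % 2 = 0 then v else star v)) :
    (List.ofFn u).prod = 1 := by
  have hnc' : σ.IsNoncrossing := by
    push Not at hnc
    exact hnc
  have hblock : ∀ i, ((σ.block i).sort.map u).prod = 1 := fun i => by
    obtain ⟨v, -, hv, heven, halt⟩ := hblocks i
    exact List.prod_eq_one_of_alternating hv (by simpa [Setoid.block] using heven)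
      fun k hk => by simpa [Setoid.block] using halt k (by simpa [Setoid.block] using hk)
  rw [List.ofFn_eq_map, ← Fin.sort_univ]
  exact hnc'.prod_map_sort_eq_one hblock univ fun _ _ j _ => mem_univ j
end

section
/- Define η(T′) = ½(𝔏(T₁) + 𝔏(T₂) − 𝔏(T′) − 2|V′|), where T′ is a graph on vertex set V′ which is the edge-disjoint union of spanning subgraphs T₁ and T₂. Then η(T′) ≤ 0. -/
open scoped Classical

/-- The subgraph of `T` on the same vertex set keeping only the edges indexed
by the left summand. -/
def MGraph.restrictL {ι₁ ι₂ : Type} (T : MGraph (ι₁ ⊕ ι₂)) : MGraph ι₁ where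
  V := T.V
  ends := fun e => T.ends (Sum.inl e)

/-- The subgraph of `T` on the same vertex set keeping only the edges indexed
by the right summand. -/
def MGraph.restrictR {ι₁ ι₂ : Type} (T : MGraph (ι₁ ⊕ ι₂)) : MGraph ι₂ where
  V := T.V
  ends := fun e => T.ends (Sum.inr e)



namespace EtaAux
open Relation

/-- leaf weight -/
def w (n : ℕ) : ℕ := if n = 0 then 2 else if n = 1 then 1 else 0

lemma w_le_two (n : ℕ) : w n ≤ 2 := by unfold w; split_ifs <;> omega
lemma w_antitone {m n : ℕ} (h : m ≤ n) : w n ≤ w m := by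
  unfold w; split_ifs <;> omega
lemma w_le_one {n : ℕ} (h : 1 ≤ n) : w n ≤ 1 := by unfold w; split_ifs <;> omega
lemma w_eq_zero {n : ℕ} (h : 2 ≤ n) : w n = 0 := by unfold w; split_ifs <;> omega
lemma w_add_eq {a b : ℕ} (h : a + b ≤ 1) : w a + w b = 2 + w (a + b) := by
  unfold w; split_ifs <;> omega
lemma w_add_le {a b : ℕ} (h : ¬ a + b ≤ 1) : w a + w b ≤ 2 := by
  unfold w; split_ifs <;> omega
lemma w_add (a b : ℕ) : w a + w b ≤ 2 + w (a + b) := by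
  unfold w; split_ifs <;> omega

variable {α : Type*}

/-- the relation identifying exactly `u` and `v`. -/
def pairRel (u v : α) (x y : α) : Prop := (x = u ∧ y = v) ∨ (x = v ∧ y = u)

lemma pairRel_symm {u v x y : α} (h : pairRel u v x y) : pairRel u v y x := by
  rcases h with ⟨h1, h2⟩ | ⟨h1, h2⟩
  · exact Or.inr ⟨h2, h1⟩
  · exact Or.inl ⟨h2, h1⟩

/-- crossing lemma -/
lemma crossing {r : α → α → Prop} {A : Set α} {x y : α}
    (h : ReflTransGen r x y) (hx : x ∈ A) (hy : y ∉ A) :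
    ∃ a b, r a b ∧ a ∈ A ∧ b ∉ A := by
  induction h with
  | refl => exact absurd hx hy
  | tail h₁ h₂ ih =>
      rename_i b c
      by_cases hb : b ∈ A
      · exact ⟨b, c, h₂, hb, hy⟩
      · exact ih hb

lemma rtg_symm {r : α → α → Prop} (hr : ∀ a b, r a b → r b a) {x y : α}
    (h : ReflTransGen r x y) : ReflTransGen r y x := by
  induction h with
  | refl => exact ReflTransGen.refl
  | tail h₁ h₂ ih => exact ReflTransGen.head (hr _ _ h₂) ih

lemma eqvGen_iff_rtg {r : α → α → Prop} (hr : ∀ a b, r a b → r b a) {x y : α} :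
    EqvGen r x y ↔ ReflTransGen r x y := by
  constructor
  · intro h
    induction h with
    | rel a b h => exact ReflTransGen.single h
    | refl a => exact ReflTransGen.refl
    | symm a b h ih => exact rtg_symm hr ih
    | trans a b c h1 h2 ih1 ih2 => exact ReflTransGen.trans ih1 ih2
  · intro h
    induction h with
    | refl => exact EqvGen.refl _
    | tail h₁ h₂ ih => exact EqvGen.trans _ _ _ ih (EqvGen.rel _ _ h₂)

lemma eqvGen_mono' {r p : α → α → Prop} (h : ∀ a b, r a b → p a b) {x y : α}
    (hxy : EqvGen r x y) : EqvGen p x y := Relation.EqvGen.mono h _ _ hxy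

/-- decomposition of the equivalence generated by `r ⊔ pair u v`. -/
lemma eqvGen_sup_pair {r : α → α → Prop} (u v : α) {x y : α} :
    EqvGen (fun a b => r a b ∨ pairRel u v a b) x y ↔
      EqvGen r x y ∨ (EqvGen r x u ∧ EqvGen r v y) ∨ (EqvGen r x v ∧ EqvGen r u y) := by
  constructor
  · intro h
    induction h with
    | rel a b h =>
        rcases h with h | ⟨h1, h2⟩ | ⟨h1, h2⟩
        · exact Or.inl (EqvGen.rel _ _ h)
        · subst h1; subst h2; exact Or.inr (Or.inl ⟨EqvGen.refl _, EqvGen.refl _⟩)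
        · subst h1; subst h2; exact Or.inr (Or.inr ⟨EqvGen.refl _, EqvGen.refl _⟩)
    | refl a => exact Or.inl (EqvGen.refl _)
    | symm a b h ih =>
        rcases ih with h1 | ⟨h1, h2⟩ | ⟨h1, h2⟩
        · exact Or.inl (EqvGen.symm _ _ h1)
        · exact Or.inr (Or.inr ⟨EqvGen.symm _ _ h2, EqvGen.symm _ _ h1⟩)
        · exact Or.inr (Or.inl ⟨EqvGen.symm _ _ h2, EqvGen.symm _ _ h1⟩)
    | trans a b c h1 h2 ih1 ih2 =>
        rcases ih1 with p1 | ⟨p1, p2⟩ | ⟨p1, p2⟩ <;>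
          rcases ih2 with q1 | ⟨q1, q2⟩ | ⟨q1, q2⟩
        · exact Or.inl (EqvGen.trans _ _ _ p1 q1)
        · exact Or.inr (Or.inl ⟨EqvGen.trans _ _ _ p1 q1, q2⟩)
        · exact Or.inr (Or.inr ⟨EqvGen.trans _ _ _ p1 q1, q2⟩)
        · exact Or.inr (Or.inl ⟨p1, EqvGen.trans _ _ _ p2 q1⟩)
        · exact Or.inl (EqvGen.trans _ _ _
            (EqvGen.trans _ _ _ p1 (EqvGen.symm _ _ (EqvGen.trans _ _ _ p2 q1))) q2)
        · exact Or.inl (EqvGen.trans _ _ _ p1 q2)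
        · exact Or.inr (Or.inr ⟨p1, EqvGen.trans _ _ _ p2 q1⟩)
        · exact Or.inl (EqvGen.trans _ _ _ p1 q2)
        · exact Or.inl (EqvGen.trans _ _ _
            (EqvGen.trans _ _ _ p1 (EqvGen.symm _ _ (EqvGen.trans _ _ _ p2 q1))) q2)
  · intro h
    have lift : ∀ {a b : α}, EqvGen r a b →
        EqvGen (fun a b => r a b ∨ pairRel u v a b) a b :=
      fun h => Relation.EqvGen.mono (fun _ _ hr => Or.inl hr) _ _ h
    have huv : EqvGen (fun a b => r a b ∨ pairRel u v a b) u v :=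
      EqvGen.rel _ _ (Or.inr (Or.inl ⟨rfl, rfl⟩))
    rcases h with h1 | ⟨h1, h2⟩ | ⟨h1, h2⟩
    · exact lift h1
    · exact EqvGen.trans _ _ _ (EqvGen.trans _ _ _ (lift h1) huv) (lift h2)
    · exact EqvGen.trans _ _ _ (EqvGen.trans _ _ _ (lift h1) (EqvGen.symm _ _ huv)) (lift h2)

end EtaAux
set_option linter.unusedSectionVars false
set_option linter.unusedVariables false
namespace MGraph
open Relation

variable {ι : Type} [Fintype ι] [DecidableEq ι]

/-- connectivity within an edge set -/
def conn (G : MGraph ι) (s : Set ι) (x y : G.V) : Prop := EqvGen (G.adjOn s) x y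

lemma adjOn_symm (G : MGraph ι) {s : Set ι} {x y : G.V} (h : G.adjOn s x y) :
    G.adjOn s y x := by
  obtain ⟨e, he, h⟩ := h
  exact ⟨e, he, h.symm⟩

lemma conn_mono (G : MGraph ι) {s t : Set ι} (hst : s ⊆ t) {x y : G.V}
    (h : G.conn s x y) : G.conn t x y :=
  EqvGen.mono (fun a b ⟨e, he, hh⟩ => ⟨e, hst he, hh⟩) _ _ h

lemma reachSetoid_r (G : MGraph ι) (s : Set ι) (x y : G.V) :
    (G.reachSetoid s) x y ↔ G.conn s x y := Iff.rfl

/-- general: a coarser setoid has fewer classes -/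
lemma card_quot_le {β : Type*} [Fintype β] {t₀ t₁ : Setoid β}
    (h : ∀ x y, t₀ x y → t₁ x y) :
    Fintype.card (Quotient t₁) ≤ Fintype.card (Quotient t₀) := by
  apply Fintype.card_le_of_surjective (Quotient.map' id (fun x y hxy => h x y hxy))
  intro q
  obtain ⟨x, rfl⟩ := Quotient.exists_rep q
  exact ⟨Quotient.mk _ x, rfl⟩

set_option linter.unusedSectionVars false in
lemma isBridge_iff (G : MGraph ι) (e : ι) :
    G.IsBridge e ↔ ¬ G.conn {x | x ≠ e} (G.ends e).1 (G.ends e).2 := by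
  set a := (G.ends e).1
  set b := (G.ends e).2
  -- relation identification
  have hrel : ∀ x y : G.V, G.conn Set.univ x y ↔
      EqvGen (fun p q => G.adjOn {x | x ≠ e} p q ∨ EtaAux.pairRel a b p q) x y := by
    intro x y
    constructor
    · refine fun h => EqvGen.mono (fun p q hpq => ?_) _ _ h
      obtain ⟨f, _, hf⟩ := hpq
      by_cases hfe : f = e
      · subst hfe
        rcases hf with hf | hf
        · exact Or.inr (Or.inl ⟨(congrArg Prod.fst hf).symm, (congrArg Prod.snd hf).symm⟩)
        · exact Or.inr (Or.inr ⟨(congrArg Prod.snd hf).symm, (congrArg Prod.fst hf).symm⟩)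
      · exact Or.inl ⟨f, hfe, hf⟩
    · refine fun h => EqvGen.mono (fun p q hpq => ?_) _ _ h
      rcases hpq with ⟨f, _, hf⟩ | ⟨h1, h2⟩ | ⟨h1, h2⟩
      · exact ⟨f, trivial, hf⟩
      · subst h1; subst h2; exact ⟨e, trivial, Or.inl rfl⟩
      · subst h1; subst h2; exact ⟨e, trivial, Or.inr rfl⟩
  constructor
  · intro hbr hconn
    -- if connected without e, the two setoids coincide, contradicting <
    have hiff : ∀ x y : G.V, (G.reachSetoid Set.univ) x y ↔ (G.reachSetoid {x | x ≠ e}) x y := by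
      intro x y
      rw [reachSetoid_r, reachSetoid_r]
      show G.conn Set.univ x y ↔ G.conn {x | x ≠ e} x y
      rw [hrel, EtaAux.eqvGen_sup_pair]
      constructor
      · rintro (h | ⟨h1, h2⟩ | ⟨h1, h2⟩)
        · exact h
        · exact EqvGen.trans _ _ _ (EqvGen.trans _ _ _ h1 hconn) h2
        · exact EqvGen.trans _ _ _ (EqvGen.trans _ _ _ h1 (EqvGen.symm _ _ hconn)) h2
      · exact fun h => Or.inl h
    have : G.ncomp Set.univ = G.ncomp {x | x ≠ e} :=
      Nat.le_antisymm (card_quot_le fun x y h => (hiff x y).mpr h)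
        (card_quot_le fun x y h => (hiff x y).mp h)
    unfold IsBridge at hbr
    omega
  · intro hconn
    unfold IsBridge ncomp
    have hle : ∀ x y, (G.reachSetoid {x | x ≠ e}) x y → (G.reachSetoid Set.univ) x y :=
      fun x y h => G.conn_mono (Set.subset_univ _) h
    set π : Quotient (G.reachSetoid {x | x ≠ e}) → Quotient (G.reachSetoid Set.univ) :=
      Quotient.map' id hle with hπ
    have hsurj : Function.Surjective π := by
      intro q
      obtain ⟨x, rfl⟩ := Quotient.exists_rep q
      exact ⟨Quotient.mk _ x, rfl⟩
    have hninj : ¬ Function.Injective π := by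
      intro hinj
      have hab : π (Quotient.mk _ a) = π (Quotient.mk _ b) := by
        refine Quotient.sound' ?_
        exact EqvGen.rel _ _ ⟨e, trivial, Or.inl rfl⟩
      have := hinj hab
      exact hconn (Quotient.exact' this)
    exact Fintype.card_lt_of_surjective_not_injective π hsurj hninj

/-- loops are not bridges -/
lemma not_isBridge_of_loop (G : MGraph ι) {e : ι} (h : (G.ends e).1 = (G.ends e).2) :
    ¬ G.IsBridge e := by
  rw [isBridge_iff]
  intro hb
  exact hb (h ▸ EqvGen.refl _)

/-- set of non-bridges -/
def nb (G : MGraph ι) : Set ι := {e | ¬ G.IsBridge e}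

/-- the two-edge-connectivity relation -/
def tec (G : MGraph ι) (x y : G.V) : Prop := G.conn G.nb x y

lemma tecSetoid_r (G : MGraph ι) (x y : G.V) : (G.tecSetoid) x y ↔ G.tec x y := Iff.rfl

lemma tec_of_nonbridge (G : MGraph ι) {e : ι} (he : ¬ G.IsBridge e) :
    G.tec (G.ends e).1 (G.ends e).2 :=
  EqvGen.rel _ _ ⟨e, he, Or.inl rfl⟩

/-- any edge leaving a tec-class is a bridge -/
lemma bridge_of_cross (G : MGraph ι) {x : G.V} {e : ι} {a b : G.V}
    (hends : G.ends e = (a, b) ∨ G.ends e = (b, a))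
    (ha : G.tec a x) (hb : ¬ G.tec b x) : G.IsBridge e := by
  by_contra hnb
  have : G.tec a b := by
    rcases hends with h | h
    · have := G.tec_of_nonbridge hnb; rw [h] at this; exact this
    · have := G.tec_of_nonbridge hnb; rw [h] at this
      exact EqvGen.symm _ _ this
  exact hb (EqvGen.trans _ _ _ (EqvGen.symm _ _ this) ha)

end MGraph
section SecC
open Relation EtaAux
namespace MGraph
variable {ι : Type} [Fintype ι] [DecidableEq ι]

/-- bridge-degree of a tec class -/
noncomputable def bdeg (G : MGraph ι) (z : Quotient G.tecSetoid) : ℕ :=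
  (Finset.univ.filter
    (fun e : ι => G.IsBridge e ∧ Quotient.mk G.tecSetoid (G.ends e).1 = z)).card
  + (Finset.univ.filter
    (fun e : ι => G.IsBridge e ∧ Quotient.mk G.tecSetoid (G.ends e).2 = z)).card

lemma forest_deg (G : MGraph ι) (z : Quotient G.tecSetoid) :
    G.forest.deg z = G.bdeg z := by
  unfold forest deg bdeg
  congr 1
  · apply Finset.card_bij (fun (e : {e : ι // G.IsBridge e}) _ => e.val)
    · intro a ha
      simp only [Finset.mem_filter, Finset.mem_univ, true_and] at ha ⊢
      exact ⟨a.property, ha⟩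
    · intro a _ b _ h
      exact Subtype.ext h
    · intro b hb
      simp only [Finset.mem_filter, Finset.mem_univ, true_and] at hb
      exact ⟨⟨b, hb.1⟩, by simp [hb.2], rfl⟩
  · apply Finset.card_bij (fun (e : {e : ι // G.IsBridge e}) _ => e.val)
    · intro a ha
      simp only [Finset.mem_filter, Finset.mem_univ, true_and] at ha ⊢
      exact ⟨a.property, ha⟩
    · intro a _ b _ h
      exact Subtype.ext h
    · intro b hb
      simp only [Finset.mem_filter, Finset.mem_univ, true_and] at hb
      exact ⟨⟨b, hb.1⟩, by simp [hb.2], rfl⟩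

lemma LL_eq (G : MGraph ι) : G.LL = ∑ z : Quotient G.tecSetoid, w (G.bdeg z) := by
  show G.forest.leafCount = _
  unfold leafCount
  apply Finset.sum_congr rfl
  intro z _
  rw [show G.forest.deg z = G.bdeg z from G.forest_deg z]
  unfold w
  rfl

end MGraph

namespace EtaAux

lemma one_count {β : Type*} [Fintype β] (p q : β → Prop) [DecidablePred p] [DecidablePred q] {e : β} (he : p e ∨ q e) :
    1 ≤ (Finset.univ.filter p).card + (Finset.univ.filter q).card := by
  rcases he with h | h
  · have h1 : 0 < (Finset.univ.filter p).card :=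
      Finset.card_pos.mpr ⟨e, by simp [h]⟩
    omega
  · have h1 : 0 < (Finset.univ.filter q).card :=
      Finset.card_pos.mpr ⟨e, by simp [h]⟩
    omega

lemma two_count {β : Type*} [Fintype β] [DecidableEq β] (p q : β → Prop) [DecidablePred p] [DecidablePred q] {e f : β}
    (hef : e ≠ f) (he : p e ∨ q e) (hf : p f ∨ q f) :
    2 ≤ (Finset.univ.filter p).card + (Finset.univ.filter q).card := by
  rcases he with he | he <;> rcases hf with hf | hf
  · have h1 : ({e, f} : Finset β) ⊆ Finset.univ.filter p := by
      intro x hx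
      rcases Finset.mem_insert.mp hx with rfl | hx
      · simp [he]
      · rcases Finset.mem_singleton.mp hx with rfl
        simp [hf]
    have := Finset.card_le_card h1
    rw [Finset.card_pair hef] at this
    omega
  · have h1 : 0 < (Finset.univ.filter p).card := Finset.card_pos.mpr ⟨e, by simp [he]⟩
    have h2 : 0 < (Finset.univ.filter q).card := Finset.card_pos.mpr ⟨f, by simp [hf]⟩
    omega
  · have h1 : 0 < (Finset.univ.filter p).card := Finset.card_pos.mpr ⟨f, by simp [hf]⟩
    have h2 : 0 < (Finset.univ.filter q).card := Finset.card_pos.mpr ⟨e, by simp [he]⟩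
    omega
  · have h1 : ({e, f} : Finset β) ⊆ Finset.univ.filter q := by
      intro x hx
      rcases Finset.mem_insert.mp hx with rfl | hx
      · simp [he]
      · rcases Finset.mem_singleton.mp hx with rfl
        simp [hf]
    have := Finset.card_le_card h1
    rw [Finset.card_pair hef] at this
    omega

end EtaAux

namespace MGraph
variable {ι : Type} [Fintype ι] [DecidableEq ι]

lemma one_le_bdeg (G : MGraph ι) {z : Quotient G.tecSetoid} {e : ι}
    (he : G.IsBridge e)
    (hz : Quotient.mk G.tecSetoid (G.ends e).1 = z ∨ Quotient.mk G.tecSetoid (G.ends e).2 = z) :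
    1 ≤ G.bdeg z := by
  unfold bdeg
  exact EtaAux.one_count _ _ (hz.imp (fun h => ⟨he, h⟩) (fun h => ⟨he, h⟩))

lemma two_le_bdeg (G : MGraph ι) {z : Quotient G.tecSetoid} {e f : ι} (hef : e ≠ f)
    (he : G.IsBridge e)
    (hze : Quotient.mk G.tecSetoid (G.ends e).1 = z ∨ Quotient.mk G.tecSetoid (G.ends e).2 = z)
    (hf : G.IsBridge f)
    (hzf : Quotient.mk G.tecSetoid (G.ends f).1 = z ∨ Quotient.mk G.tecSetoid (G.ends f).2 = z) :
    2 ≤ G.bdeg z := by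
  unfold bdeg
  exact EtaAux.two_count _ _ hef (hze.imp (fun h => ⟨he, h⟩) (fun h => ⟨he, h⟩))
    (hzf.imp (fun h => ⟨hf, h⟩) (fun h => ⟨hf, h⟩))

/-- crossing a tec class yields a bridge incident to it -/
lemma exists_cross_bridge (G : MGraph ι) {s : Set ι} {x p q : G.V}
    (h : G.conn s p q) (hp : G.tec p x) (hq : ¬ G.tec q x) :
    ∃ e ∈ s, G.IsBridge e ∧ ∃ a b : G.V,
      (G.ends e = (a, b) ∨ G.ends e = (b, a)) ∧ G.tec a x ∧ ¬ G.tec b x := by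
  have hrtg := (EtaAux.eqvGen_iff_rtg (fun a b h => G.adjOn_symm h)).mp h
  obtain ⟨a, b, hab, ha, hb⟩ := EtaAux.crossing (A := {w : G.V | G.tec w x}) hrtg hp hq
  obtain ⟨e, he, hends⟩ := hab
  exact ⟨e, he, G.bridge_of_cross hends ha hb, a, b, hends, ha, hb⟩

end MGraph
end SecC
section SecD
open Relation

namespace EtaAux
variable {α : Type*}

/-- the setoid merging `u` and `v` -/
noncomputable def mset (u v : α) : Setoid α :=
  Setoid.ker (fun x => if x = v then u else x)

lemma mset_rel {u v x y : α} : mset u v x y ↔ x = y ∨ pairRel u v x y := by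
  show (if x = v then u else x) = (if y = v then u else y) ↔ _
  unfold pairRel
  by_cases h1 : x = v <;> by_cases h2 : y = v
  · rw [if_pos h1, if_pos h2]; subst h1; subst h2; simp
  · rw [if_pos h1, if_neg h2]
    subst h1
    constructor
    · intro h; exact Or.inr (Or.inr ⟨rfl, h.symm⟩)
    · rintro (rfl | ⟨rfl, rfl⟩ | ⟨-, rfl⟩)
      · exact absurd rfl h2
      · rfl
      · rfl
  · rw [if_neg h1, if_pos h2]
    subst h2
    constructor
    · intro h; exact Or.inr (Or.inl ⟨h, rfl⟩)
    · rintro (rfl | ⟨rfl, -⟩ | ⟨rfl, rfl⟩)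
      · exact absurd rfl h1
      · rfl
      · rfl
  · rw [if_neg h1, if_neg h2]
    constructor
    · intro h; exact Or.inl h
    · rintro (rfl | ⟨rfl, rfl⟩ | ⟨rfl, rfl⟩)
      · rfl
      · exact absurd rfl h2
      · exact absurd rfl h1

lemma mset_mk_eq {u v x y : α} :
    (Quotient.mk (mset u v) x = Quotient.mk (mset u v) y) ↔ x = y ∨ pairRel u v x y := by
  rw [Quotient.eq]
  exact mset_rel

end EtaAux

namespace MGraph
open EtaAux
variable {ι : Type} [Fintype ι] [DecidableEq ι]

/-- quotient graph merging two vertices -/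
noncomputable def mq (G : MGraph ι) (u v : G.V) : MGraph ι := G.quot (mset u v)

/-- merged connectivity pulled back to `G` -/
def rho (G : MGraph ι) (u v : G.V) (s : Set ι) (x y : G.V) : Prop :=
  EqvGen (fun a b => G.adjOn s a b ∨ pairRel u v a b) x y

lemma rho_of_mk_eq (G : MGraph ι) {u v x y : G.V} {s : Set ι}
    (h : Quotient.mk (mset u v) x = Quotient.mk (mset u v) y) :
    G.rho u v s x y := by
  rcases mset_mk_eq.mp h with rfl | hp
  · exact EqvGen.refl _
  · exact EqvGen.rel _ _ (Or.inr hp)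

lemma conn_mq_iff (G : MGraph ι) {u v : G.V} {s : Set ι} {x y : G.V} :
    (G.mq u v).conn s (Quotient.mk (mset u v) x) (Quotient.mk (mset u v) y) ↔
      G.rho u v s x y := by
  constructor
  · intro h
    have key : ∀ q₁ q₂ : (G.mq u v).V, (G.mq u v).conn s q₁ q₂ →
        ∀ x y : G.V, Quotient.mk (mset u v) x = q₁ → Quotient.mk (mset u v) y = q₂ →
        G.rho u v s x y := by
      intro q₁ q₂ h
      induction h with
      | rel a b hab =>
          intro x y hx hy
          obtain ⟨e, he, hends⟩ := hab
          have hstep : G.rho u v s (G.ends e).1 (G.ends e).2 :=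
            EqvGen.rel _ _ (Or.inl ⟨e, he, Or.inl rfl⟩)
          rcases hends with hh | hh
          · have h1 : Quotient.mk (mset u v) (G.ends e).1 = a := congrArg Prod.fst hh
            have h2 : Quotient.mk (mset u v) (G.ends e).2 = b := congrArg Prod.snd hh
            exact EqvGen.trans _ _ _
              (EqvGen.trans _ _ _ (G.rho_of_mk_eq (hx.trans h1.symm)) hstep)
              (G.rho_of_mk_eq (h2.trans hy.symm))
          · have h1 : Quotient.mk (mset u v) (G.ends e).1 = b := congrArg Prod.fst hh
            have h2 : Quotient.mk (mset u v) (G.ends e).2 = a := congrArg Prod.snd hh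
            exact EqvGen.trans _ _ _
              (EqvGen.trans _ _ _ (G.rho_of_mk_eq (hx.trans h2.symm))
                (EqvGen.symm _ _ hstep))
              (G.rho_of_mk_eq (h1.trans hy.symm))
      | refl a =>
          intro x y hx hy
          exact G.rho_of_mk_eq (hx.trans hy.symm)
      | symm a b h ih =>
          intro x y hx hy
          exact EqvGen.symm _ _ (ih y x hy hx)
      | trans a b c h1 h2 ih1 ih2 =>
          intro x y hx hy
          obtain ⟨z, hz⟩ := Quotient.exists_rep b
          exact EqvGen.trans _ _ _ (ih1 x z hx hz) (ih2 z y hz hy)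
    exact key _ _ h x y rfl rfl
  · intro h
    induction h with
    | rel a b hab =>
        rcases hab with ⟨e, he, hends⟩ | hp
        · refine EqvGen.rel _ _ ⟨e, he, ?_⟩
          rcases hends with hh | hh
          · left
            show (Quotient.mk (mset u v) (G.ends e).1, Quotient.mk (mset u v) (G.ends e).2) = _
            rw [hh]; rfl
          · right
            show (Quotient.mk (mset u v) (G.ends e).1, Quotient.mk (mset u v) (G.ends e).2) = _
            rw [hh]; rfl
        · have : Quotient.mk (mset u v) a = Quotient.mk (mset u v) b :=
            mset_mk_eq.mpr (Or.inr hp)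
          rw [this]
          exact EqvGen.refl _
    | refl a => exact EqvGen.refl _
    | symm a b h ih => exact EqvGen.symm _ _ ih
    | trans a b c h1 h2 ih1 ih2 => exact EqvGen.trans _ _ _ ih1 ih2

lemma isBridge_mq_iff (G : MGraph ι) {u v : G.V} {e : ι} :
    (G.mq u v).IsBridge e ↔ ¬ G.rho u v {x | x ≠ e} (G.ends e).1 (G.ends e).2 := by
  rw [isBridge_iff]
  exact not_congr (G.conn_mq_iff)

lemma rho_of_conn (G : MGraph ι) {u v : G.V} {s : Set ι} {x y : G.V}
    (h : G.conn s x y) : G.rho u v s x y :=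
  EqvGen.mono (fun a b hab => Or.inl hab) _ _ h

/-- non-bridges stay non-bridges in the merged graph -/
lemma nb_mq (G : MGraph ι) {u v : G.V} {e : ι} (he : ¬ G.IsBridge e) :
    ¬ (G.mq u v).IsBridge e := by
  rw [isBridge_mq_iff]
  rw [isBridge_iff, not_not] at he
  exact fun hc => hc (G.rho_of_conn he)

lemma isBridge_of_mq (G : MGraph ι) {u v : G.V} {e : ι}
    (he : (G.mq u v).IsBridge e) : G.IsBridge e := by
  by_contra h
  exact G.nb_mq h he

lemma tec_mq_iff (G : MGraph ι) {u v : G.V} {x y : G.V} :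
    (G.mq u v).tec (Quotient.mk (mset u v) x) (Quotient.mk (mset u v) y) ↔
      G.rho u v (G.mq u v).nb x y :=
  G.conn_mq_iff

lemma rho_of_tec (G : MGraph ι) {u v : G.V} {x y : G.V} (h : G.tec x y) :
    G.rho u v (G.mq u v).nb x y :=
  EqvGen.mono (fun a b ⟨e, he, hh⟩ => Or.inl ⟨e, G.nb_mq he, hh⟩) _ _ h

/-- the induced map on tec classes -/
noncomputable def phi (G : MGraph ι) (u v : G.V) :
    Quotient G.tecSetoid → Quotient (G.mq u v).tecSetoid :=
  Quotient.lift (fun x => Quotient.mk (G.mq u v).tecSetoid (Quotient.mk (mset u v) x))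
    (fun x y h => Quotient.sound ((G.tec_mq_iff).mpr (G.rho_of_tec h)))

lemma phi_mk (G : MGraph ι) (u v : G.V) (x : G.V) :
    G.phi u v (Quotient.mk G.tecSetoid x)
      = Quotient.mk (G.mq u v).tecSetoid (Quotient.mk (mset u v) x) := rfl

lemma phi_surjective (G : MGraph ι) (u v : G.V) : Function.Surjective (G.phi u v) := by
  intro q
  obtain ⟨q', rfl⟩ := Quotient.exists_rep q
  obtain ⟨x, rfl⟩ := Quotient.exists_rep q'
  exact ⟨Quotient.mk _ x, rfl⟩

lemma phi_eq_iff (G : MGraph ι) {u v : G.V} {x y : G.V} :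
    G.phi u v (Quotient.mk G.tecSetoid x) = G.phi u v (Quotient.mk G.tecSetoid y) ↔
      G.rho u v (G.mq u v).nb x y := by
  rw [phi_mk, phi_mk]
  constructor
  · intro h
    exact (G.tec_mq_iff).mp (Quotient.exact h)
  · intro h
    exact Quotient.sound ((G.tec_mq_iff).mpr h)

end MGraph
end SecD
section SecE
open Relation EtaAux
namespace MGraph
variable {ι : Type} [Fintype ι] [DecidableEq ι]

lemma tec_symm (G : MGraph ι) {x y : G.V} (h : G.tec x y) : G.tec y x :=
  EqvGen.symm _ _ h
lemma tec_trans (G : MGraph ι) {x y z : G.V} (h : G.tec x y) (h' : G.tec y z) :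
    G.tec x z := EqvGen.trans _ _ _ h h'
lemma tec_refl (G : MGraph ι) (x : G.V) : G.tec x x := EqvGen.refl _

lemma tec_mk_eq (G : MGraph ι) {x y : G.V} (h : G.tec x y) :
    Quotient.mk G.tecSetoid x = Quotient.mk G.tecSetoid y := Quotient.sound h

lemma tec_of_mk_eq (G : MGraph ι) {x y : G.V}
    (h : Quotient.mk G.tecSetoid x = Quotient.mk G.tecSetoid y) : G.tec x y :=
  Quotient.exact h

/-- If `u ~ v`, every bridge stays a bridge after merging. -/
lemma isBridge_mq_of_tec (G : MGraph ι) {u v : G.V} (htec : G.tec u v) {e : ι}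
    (he : G.IsBridge e) : (G.mq u v).IsBridge e := by
  rw [isBridge_mq_iff]
  intro hrho
  have hnc := (G.isBridge_iff e).mp he
  have hsub : G.nb ⊆ {x | x ≠ e} := by
    intro f hf hfe
    rw [hfe] at hf
    exact hf he
  have huv : G.conn {x | x ≠ e} u v := G.conn_mono hsub htec
  rcases (eqvGen_sup_pair u v).mp hrho with h | ⟨h1, h2⟩ | ⟨h1, h2⟩
  · exact hnc h
  · exact hnc (EqvGen.trans _ _ _ (EqvGen.trans _ _ _ h1 huv) h2)
  · exact hnc (EqvGen.trans _ _ _ (EqvGen.trans _ _ _ h1 (EqvGen.symm _ _ huv)) h2)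

/-- If `u, v` are in different components, every bridge stays a bridge. -/
lemma isBridge_mq_of_not_conn (G : MGraph ι) {u v : G.V}
    (hnc : ¬ G.conn Set.univ u v) {e : ι}
    (he : G.IsBridge e) : (G.mq u v).IsBridge e := by
  rw [isBridge_mq_iff]
  intro hrho
  have hbc := (G.isBridge_iff e).mp he
  have hedge : G.conn Set.univ (G.ends e).1 (G.ends e).2 :=
    EqvGen.rel _ _ ⟨e, trivial, Or.inl rfl⟩
  have hmono : ∀ {a b : G.V}, G.conn {x | x ≠ e} a b → G.conn Set.univ a b :=
    fun h => G.conn_mono (Set.subset_univ _) h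
  rcases (eqvGen_sup_pair u v).mp hrho with h | ⟨h1, h2⟩ | ⟨h1, h2⟩
  · exact hbc h
  · -- h1 : conn p u, h2 : conn v q ; p-q linked by e
    exact hnc (EqvGen.trans _ _ _ (EqvGen.trans _ _ _
      (EqvGen.symm _ _ (hmono h1)) hedge) (EqvGen.symm _ _ (hmono h2)))
  · -- h1 : conn p v, h2 : conn u q
    exact hnc (EqvGen.trans _ _ _ (EqvGen.trans _ _ _
      (hmono h2) (EqvGen.symm _ _ hedge)) (hmono h1))

/-- merging inside a tec class does not change `𝔏`. -/
lemma LL_mq_eq (G : MGraph ι) {u v : G.V} (htec : G.tec u v) :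
    (G.mq u v).LL = G.LL := by
  have hbr : ∀ e, (G.mq u v).IsBridge e ↔ G.IsBridge e :=
    fun e => ⟨G.isBridge_of_mq, G.isBridge_mq_of_tec htec⟩
  have hnb : (G.mq u v).nb = G.nb := Set.ext fun e => not_congr (hbr e)
  have hrho : ∀ x y : G.V, G.rho u v (G.mq u v).nb x y ↔ G.tec x y := by
    intro x y
    constructor
    · intro h
      rw [hnb] at h
      rcases (eqvGen_sup_pair u v).mp h with h | ⟨h1, h2⟩ | ⟨h1, h2⟩
      · exact h
      · exact G.tec_trans (G.tec_trans h1 htec) h2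
      · exact G.tec_trans (G.tec_trans h1 (G.tec_symm htec)) h2
    · exact fun h => G.rho_of_tec h
  have hinj : Function.Injective (G.phi u v) := by
    intro z1 z2
    induction z1 using Quotient.ind with | _ x =>
    induction z2 using Quotient.ind with | _ y =>
    intro h
    exact G.tec_mk_eq ((hrho x y).mp ((G.phi_eq_iff).mp h))
  have hdeg : ∀ z, (G.mq u v).bdeg (G.phi u v z) = G.bdeg z := by
    intro z
    induction z using Quotient.ind with | _ x =>
    unfold bdeg
    have hside : ∀ a : G.V,
        (Quotient.mk (G.mq u v).tecSetoid (Quotient.mk (mset u v) a)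
            = G.phi u v (Quotient.mk G.tecSetoid x))
          ↔ (Quotient.mk G.tecSetoid a = Quotient.mk G.tecSetoid x) := by
      intro a
      rw [phi_mk]
      constructor
      · intro h
        exact G.tec_mk_eq ((hrho a x).mp ((G.tec_mq_iff).mp (Quotient.exact h)))
      · intro h
        exact Quotient.sound ((G.tec_mq_iff).mpr ((hrho a x).mpr (G.tec_of_mk_eq h)))
    congr 1
    · apply Finset.card_bij (fun e _ => e)
      · intro e he
        simp only [Finset.mem_filter, Finset.mem_univ, true_and] at he ⊢
        exact ⟨(hbr e).mp he.1, (hside (G.ends e).1).mp he.2⟩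
      · intro a _ b _ h; exact h
      · intro e he
        simp only [Finset.mem_filter, Finset.mem_univ, true_and] at he
        exact ⟨e, by
          simp only [Finset.mem_filter, Finset.mem_univ, true_and]
          exact ⟨(hbr e).mpr he.1, (hside (G.ends e).1).mpr he.2⟩, rfl⟩
    · apply Finset.card_bij (fun e _ => e)
      · intro e he
        simp only [Finset.mem_filter, Finset.mem_univ, true_and] at he ⊢
        exact ⟨(hbr e).mp he.1, (hside (G.ends e).2).mp he.2⟩
      · intro a _ b _ h; exact h
      · intro e he
        simp only [Finset.mem_filter, Finset.mem_univ, true_and] at he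
        exact ⟨e, by
          simp only [Finset.mem_filter, Finset.mem_univ, true_and]
          exact ⟨(hbr e).mpr he.1, (hside (G.ends e).2).mpr he.2⟩, rfl⟩
  rw [LL_eq, LL_eq]
  exact (Fintype.sum_bijective (G.phi u v) ⟨hinj, G.phi_surjective u v⟩
    (fun z => w (G.bdeg z)) (fun z' => w ((G.mq u v).bdeg z'))
    (fun z => by
      show w (G.bdeg z) = w ((G.mq u v).bdeg (G.phi u v z))
      rw [hdeg])).symm

end MGraph
end SecE
section SecF
open Relation EtaAux Finset
namespace MGraph
variable {ι : Type} [Fintype ι] [DecidableEq ι]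

lemma rho_vu (G : MGraph ι) (u v : G.V) {s : Set ι} : G.rho u v s v u :=
  EqvGen.rel _ _ (Or.inr (Or.inr ⟨rfl, rfl⟩))

lemma LL_le_mq (G : MGraph ι) (u v : G.V) : G.LL ≤ (G.mq u v).LL + 2 := by
  by_cases htec : G.tec u v
  · rw [G.LL_mq_eq htec]; omega
  -- core: a class not containing u,v, merged with something outside, has ≥ 2 bridges
  have core : ∀ x : G.V, ¬ G.tec u x → ¬ G.tec v x →
      (∃ y : G.V, G.conn (G.mq u v).nb x y ∧ ¬ G.tec y x) →
      2 ≤ G.bdeg (Quotient.mk G.tecSetoid x) := by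
    rintro x hux hvx ⟨y, hcy, hyx⟩
    obtain ⟨e, heNB, hbre, a, b, hends, hax, hbx⟩ :=
      G.exists_cross_bridge hcy (G.tec_refl x) hyx
    have hrho : G.rho u v {w | w ≠ e} (G.ends e).1 (G.ends e).2 := by
      have h : ¬ (G.mq u v).IsBridge e := heNB
      rw [isBridge_mq_iff, not_not] at h
      exact h
    have hnc : ¬ G.conn {w | w ≠ e} (G.ends e).1 (G.ends e).2 := (G.isBridge_iff e).mp hbre
    have hm : ∃ m : G.V, G.conn {w | w ≠ e} a m ∧ ¬ G.tec m x := by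
      rcases (eqvGen_sup_pair u v).mp hrho with h | ⟨h1, h2⟩ | ⟨h1, h2⟩
      · exact absurd h hnc
      · rcases hends with hh | hh
        · exact ⟨u, by rw [hh] at h1; exact h1, fun h' => hux h'⟩
        · exact ⟨v, by rw [hh] at h2; exact EqvGen.symm _ _ h2, fun h' => hvx h'⟩
      · rcases hends with hh | hh
        · exact ⟨v, by rw [hh] at h1; exact h1, fun h' => hvx h'⟩
        · exact ⟨u, by rw [hh] at h2; exact EqvGen.symm _ _ h2, fun h' => hux h'⟩
    obtain ⟨m, hcm, hmx⟩ := hm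
    obtain ⟨f, hfs, hbrf, c, d, hendsf, hcx, hdx⟩ := G.exists_cross_bridge hcm hax hmx
    have hef : e ≠ f := fun h => hfs h.symm
    refine G.two_le_bdeg hef hbre ?_ hbrf ?_
    · rcases hends with hh | hh
      · exact Or.inl (by rw [hh]; exact G.tec_mk_eq hax)
      · exact Or.inr (by rw [hh]; exact G.tec_mk_eq hax)
    · rcases hendsf with hh | hh
      · exact Or.inl (by rw [hh]; exact G.tec_mk_eq hcx)
      · exact Or.inr (by rw [hh]; exact G.tec_mk_eq hcx)
  -- fiberwise bound
  have fib : ∀ z' : Quotient (G.mq u v).tecSetoid,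
      ∑ z ∈ Finset.univ.filter (fun z => G.phi u v z = z'), w (G.bdeg z)
        ≤ w ((G.mq u v).bdeg z')
          + (if z' = G.phi u v (Quotient.mk G.tecSetoid u) then 2 else 0) := by
    intro z'
    by_cases hz : z' = G.phi u v (Quotient.mk G.tecSetoid u)
    · rw [if_pos hz]
      subst hz
      by_cases hcuv : G.conn Set.univ u v
      · -- u,v connected but not tec-equivalent
        have hvu : ¬ G.tec v u := fun h => htec (G.tec_symm h)
        obtain ⟨e, _, hbre, a, b, hends, hax, hbx⟩ :=
          G.exists_cross_bridge hcuv (G.tec_refl u) hvu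
        have h1 : 1 ≤ G.bdeg (Quotient.mk G.tecSetoid u) := by
          refine G.one_le_bdeg hbre ?_
          rcases hends with hh | hh
          · exact Or.inl (by rw [hh]; exact G.tec_mk_eq hax)
          · exact Or.inr (by rw [hh]; exact G.tec_mk_eq hax)
        have huv' : ¬ G.tec u v := htec
        obtain ⟨f, _, hbrf, c, d, hendsf, hcx, hdx⟩ :=
          G.exists_cross_bridge (EqvGen.symm _ _ hcuv) (G.tec_refl v) huv'
        have h2 : 1 ≤ G.bdeg (Quotient.mk G.tecSetoid v) := by
          refine G.one_le_bdeg hbrf ?_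
          rcases hendsf with hh | hh
          · exact Or.inl (by rw [hh]; exact G.tec_mk_eq hcx)
          · exact Or.inr (by rw [hh]; exact G.tec_mk_eq hcx)
        have hpt : ∀ z ∈ Finset.univ.filter
            (fun z => G.phi u v z = G.phi u v (Quotient.mk G.tecSetoid u)),
            w (G.bdeg z) ≤ (if z = Quotient.mk G.tecSetoid u then 1 else
              if z = Quotient.mk G.tecSetoid v then 1 else 0) := by
          intro z hzF
          obtain ⟨x, rfl⟩ := Quotient.exists_rep z
          by_cases hzu : Quotient.mk G.tecSetoid x = Quotient.mk G.tecSetoid u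
          · rw [if_pos hzu, hzu]; exact w_le_one h1
          · by_cases hzv : Quotient.mk G.tecSetoid x = Quotient.mk G.tecSetoid v
            · rw [if_neg hzu, if_pos hzv, hzv]; exact w_le_one h2
            · rw [if_neg hzu, if_neg hzv]
              have hρ : G.rho u v (G.mq u v).nb x u :=
                (G.phi_eq_iff).mp (Finset.mem_filter.mp hzF).2
              have hux : ¬ G.tec u x := fun h => hzu (G.tec_mk_eq (G.tec_symm h))
              have hvx : ¬ G.tec v x := fun h => hzv (G.tec_mk_eq (G.tec_symm h))
              have h2le : 2 ≤ G.bdeg (Quotient.mk G.tecSetoid x) := by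
                rcases (eqvGen_sup_pair u v).mp hρ with h | ⟨h, _⟩ | ⟨h, _⟩
                · exact core x hux hvx ⟨u, h, hux⟩
                · exact core x hux hvx ⟨u, h, hux⟩
                · exact core x hux hvx ⟨v, h, hvx⟩
              rw [w_eq_zero h2le]
        have hsum2 : ∑ z : Quotient G.tecSetoid,
            (if z = Quotient.mk G.tecSetoid u then 1 else
              if z = Quotient.mk G.tecSetoid v then 1 else 0) ≤ 2 := by
          have hpt2 : ∀ z : Quotient G.tecSetoid,
              (if z = Quotient.mk G.tecSetoid u then 1 else
                if z = Quotient.mk G.tecSetoid v then 1 else 0)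
              ≤ (if z = Quotient.mk G.tecSetoid u then 1 else 0)
                + (if z = Quotient.mk G.tecSetoid v then (1:ℕ) else 0) := by
            intro z; split_ifs <;> omega
          calc ∑ z : Quotient G.tecSetoid, _ ≤ _ :=
                Finset.sum_le_sum (fun z _ => hpt2 z)
            _ ≤ 2 := by
                rw [Finset.sum_add_distrib, Finset.sum_ite_eq' Finset.univ,
                  Finset.sum_ite_eq' Finset.univ]
                simp
        calc ∑ z ∈ Finset.univ.filter
              (fun z => G.phi u v z = G.phi u v (Quotient.mk G.tecSetoid u)),
              w (G.bdeg z)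
            ≤ ∑ z ∈ Finset.univ.filter
              (fun z => G.phi u v z = G.phi u v (Quotient.mk G.tecSetoid u)),
              (if z = Quotient.mk G.tecSetoid u then 1 else
                if z = Quotient.mk G.tecSetoid v then 1 else 0) :=
              Finset.sum_le_sum hpt
          _ ≤ ∑ z : Quotient G.tecSetoid,
              (if z = Quotient.mk G.tecSetoid u then 1 else
                if z = Quotient.mk G.tecSetoid v then 1 else 0) :=
              Finset.sum_le_sum_of_subset_of_nonneg (Finset.filter_subset _ _)
                (fun z _ _ => by split_ifs <;> omega)
          _ ≤ 2 := hsum2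
          _ ≤ w ((G.mq u v).bdeg (G.phi u v (Quotient.mk G.tecSetoid u))) + 2 :=
              Nat.le_add_left 2 _
      · -- u,v in different components
        have hbr : ∀ e, (G.mq u v).IsBridge e ↔ G.IsBridge e :=
          fun e => ⟨G.isBridge_of_mq, G.isBridge_mq_of_not_conn hcuv⟩
        have hnb : (G.mq u v).nb = G.nb := Set.ext fun e => not_congr (hbr e)
        have hrho : ∀ x y : G.V, G.rho u v (G.mq u v).nb x y →
            (G.tec x y ∨ (G.tec x u ∧ G.tec v y) ∨ (G.tec x v ∧ G.tec u y)) := by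
          intro x y h
          rw [hnb] at h
          exact (eqvGen_sup_pair u v).mp h
        have hne : Quotient.mk G.tecSetoid u ≠ Quotient.mk G.tecSetoid v :=
          fun h => htec (G.tec_of_mk_eq h)
        have huF : Quotient.mk G.tecSetoid u ∈ Finset.univ.filter
            (fun z => G.phi u v z = G.phi u v (Quotient.mk G.tecSetoid u)) :=
          Finset.mem_filter.mpr ⟨Finset.mem_univ _, rfl⟩
        have hphiv : G.phi u v (Quotient.mk G.tecSetoid v)
            = G.phi u v (Quotient.mk G.tecSetoid u) := by
          rw [phi_mk, phi_mk]
          exact congrArg _ (Quotient.sound (mset_rel.mpr (Or.inr (Or.inr ⟨rfl, rfl⟩))))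
        have hvF : Quotient.mk G.tecSetoid v ∈ Finset.univ.filter
            (fun z => G.phi u v z = G.phi u v (Quotient.mk G.tecSetoid u)) :=
          Finset.mem_filter.mpr ⟨Finset.mem_univ _, hphiv⟩
        have hFsub : Finset.univ.filter
            (fun z => G.phi u v z = G.phi u v (Quotient.mk G.tecSetoid u))
            ⊆ {Quotient.mk G.tecSetoid u, Quotient.mk G.tecSetoid v} := by
          intro z hzF
          obtain ⟨x, rfl⟩ := Quotient.exists_rep z
          have hρ : G.rho u v (G.mq u v).nb x u :=
            (G.phi_eq_iff).mp (Finset.mem_filter.mp hzF).2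
          rcases hrho x u hρ with h | ⟨h, _⟩ | ⟨h, _⟩
          · exact Finset.mem_insert.mpr (Or.inl (G.tec_mk_eq h))
          · exact Finset.mem_insert.mpr (Or.inl (G.tec_mk_eq h))
          · exact Finset.mem_insert.mpr (Or.inr (Finset.mem_singleton.mpr (G.tec_mk_eq h)))
        have hF : Finset.univ.filter
            (fun z => G.phi u v z = G.phi u v (Quotient.mk G.tecSetoid u))
            = {Quotient.mk G.tecSetoid u, Quotient.mk G.tecSetoid v} :=
          Finset.Subset.antisymm hFsub
            (Finset.insert_subset huF (Finset.singleton_subset_iff.mpr hvF))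
        rw [hF, Finset.sum_pair hne]
        -- degree bound
        have hdeg : (G.mq u v).bdeg (G.phi u v (Quotient.mk G.tecSetoid u))
            ≤ G.bdeg (Quotient.mk G.tecSetoid u) + G.bdeg (Quotient.mk G.tecSetoid v) := by
          have key : ∀ a : G.V,
              Quotient.mk (G.mq u v).tecSetoid (Quotient.mk (mset u v) a)
                = G.phi u v (Quotient.mk G.tecSetoid u) →
              Quotient.mk G.tecSetoid a = Quotient.mk G.tecSetoid u ∨
              Quotient.mk G.tecSetoid a = Quotient.mk G.tecSetoid v := by
            intro a h
            have hρ : G.rho u v (G.mq u v).nb a u := by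
              rw [phi_mk] at h
              exact (G.tec_mq_iff).mp (Quotient.exact h)
            rcases hrho a u hρ with h' | ⟨h', _⟩ | ⟨h', _⟩
            · exact Or.inl (G.tec_mk_eq h')
            · exact Or.inl (G.tec_mk_eq h')
            · exact Or.inr (G.tec_mk_eq h')
          unfold bdeg
          have s1 : (Finset.univ.filter (fun e : ι => (G.mq u v).IsBridge e ∧
                Quotient.mk (G.mq u v).tecSetoid (((G.mq u v).ends e).1)
                  = G.phi u v (Quotient.mk G.tecSetoid u))).card
              ≤ (Finset.univ.filter (fun e : ι => G.IsBridge e ∧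
                  Quotient.mk G.tecSetoid ((G.ends e).1) = Quotient.mk G.tecSetoid u)).card
                + (Finset.univ.filter (fun e : ι => G.IsBridge e ∧
                  Quotient.mk G.tecSetoid ((G.ends e).1) = Quotient.mk G.tecSetoid v)).card := by
            refine le_trans (Finset.card_le_card ?_) (Finset.card_union_le _ _)
            intro e he
            obtain ⟨-, hb, hcls⟩ := Finset.mem_filter.mp he
            rcases key _ hcls with h' | h'
            · exact Finset.mem_union_left _ (Finset.mem_filter.mpr
                ⟨Finset.mem_univ _, (hbr e).mp hb, h'⟩)
            · exact Finset.mem_union_right _ (Finset.mem_filter.mpr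
                ⟨Finset.mem_univ _, (hbr e).mp hb, h'⟩)
          have s2 : (Finset.univ.filter (fun e : ι => (G.mq u v).IsBridge e ∧
                Quotient.mk (G.mq u v).tecSetoid (((G.mq u v).ends e).2)
                  = G.phi u v (Quotient.mk G.tecSetoid u))).card
              ≤ (Finset.univ.filter (fun e : ι => G.IsBridge e ∧
                  Quotient.mk G.tecSetoid ((G.ends e).2) = Quotient.mk G.tecSetoid u)).card
                + (Finset.univ.filter (fun e : ι => G.IsBridge e ∧
                  Quotient.mk G.tecSetoid ((G.ends e).2) = Quotient.mk G.tecSetoid v)).card := by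
            refine le_trans (Finset.card_le_card ?_) (Finset.card_union_le _ _)
            intro e he
            obtain ⟨-, hb, hcls⟩ := Finset.mem_filter.mp he
            rcases key _ hcls with h' | h'
            · exact Finset.mem_union_left _ (Finset.mem_filter.mpr
                ⟨Finset.mem_univ _, (hbr e).mp hb, h'⟩)
            · exact Finset.mem_union_right _ (Finset.mem_filter.mpr
                ⟨Finset.mem_univ _, (hbr e).mp hb, h'⟩)
          omega
        have := w_add (G.bdeg (Quotient.mk G.tecSetoid u)) (G.bdeg (Quotient.mk G.tecSetoid v))
        have hmono := w_antitone hdeg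
        omega
    · rw [if_neg hz, add_zero]
      by_cases hnt : ∃ z₁ ∈ Finset.univ.filter (fun z => G.phi u v z = z'),
          ∃ z₂ ∈ Finset.univ.filter (fun z => G.phi u v z = z'), z₁ ≠ z₂
      · obtain ⟨z₁, hz₁, z₂, hz₂, h12⟩ := hnt
        have hzero : ∀ z ∈ Finset.univ.filter (fun z => G.phi u v z = z'),
            w (G.bdeg z) = 0 := by
          intro z hzF
          obtain ⟨z₀, hz₀F, hz₀⟩ : ∃ z₀ ∈ Finset.univ.filter
              (fun z => G.phi u v z = z'), z₀ ≠ z := by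
            by_cases h : z₁ = z
            · exact ⟨z₂, hz₂, fun hh => h12 (h.trans hh.symm)⟩
            · exact ⟨z₁, hz₁, h⟩
          obtain ⟨x, rfl⟩ := Quotient.exists_rep z
          obtain ⟨y, rfl⟩ := Quotient.exists_rep z₀
          have hρxy : G.rho u v (G.mq u v).nb x y :=
            (G.phi_eq_iff).mp ((Finset.mem_filter.mp hzF).2.trans
              (Finset.mem_filter.mp hz₀F).2.symm)
          have hτyx : ¬ G.tec y x := fun h => hz₀ (G.tec_mk_eq h)
          have hρxu : ¬ G.rho u v (G.mq u v).nb x u :=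
            fun h => hz ((Finset.mem_filter.mp hzF).2.symm.trans (G.phi_eq_iff.mpr h))
          have hux : ¬ G.tec u x := fun h => hρxu (G.rho_of_tec (G.tec_symm h))
          have hvx : ¬ G.tec v x := fun h => hρxu
            (EqvGen.trans _ _ _ (G.rho_of_tec (G.tec_symm h)) (G.rho_vu u v))
          rcases (eqvGen_sup_pair u v).mp hρxy with h | ⟨h, _⟩ | ⟨h, _⟩
          · exact w_eq_zero (core x hux hvx ⟨y, h, hτyx⟩)
          · exact absurd (G.rho_of_conn h) hρxu
          · exact absurd (EqvGen.trans _ _ _ (G.rho_of_conn h) (G.rho_vu u v)) hρxu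
        rw [Finset.sum_eq_zero hzero]
        exact Nat.zero_le _
      · push_neg at hnt
        rcases Finset.eq_empty_or_nonempty
            (Finset.univ.filter (fun z => G.phi u v z = z')) with hF | hF
        · rw [hF, Finset.sum_empty]
          exact Nat.zero_le _
        · obtain ⟨z₀, hz₀⟩ := hF
          have hFs : Finset.univ.filter (fun z => G.phi u v z = z') = {z₀} :=
            Finset.eq_singleton_iff_unique_mem.mpr
              ⟨hz₀, fun z hz' => hnt z hz' z₀ hz₀⟩
          rw [hFs, Finset.sum_singleton]
          apply w_antitone
          obtain ⟨x₀, rfl⟩ := Quotient.exists_rep z₀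
          unfold bdeg
          have key : ∀ a : G.V,
              Quotient.mk (G.mq u v).tecSetoid (Quotient.mk (mset u v) a) = z' →
              Quotient.mk G.tecSetoid a = Quotient.mk G.tecSetoid x₀ := by
            intro a h
            have haF : Quotient.mk G.tecSetoid a ∈ Finset.univ.filter
                (fun z => G.phi u v z = z') :=
              Finset.mem_filter.mpr ⟨Finset.mem_univ _, (G.phi_mk u v a).trans h⟩
            rw [hFs] at haF
            exact Finset.mem_singleton.mp haF
          have s1 : (Finset.univ.filter (fun e : ι => (G.mq u v).IsBridge e ∧
                Quotient.mk (G.mq u v).tecSetoid (((G.mq u v).ends e).1) = z')).card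
              ≤ (Finset.univ.filter (fun e : ι => G.IsBridge e ∧
                  Quotient.mk G.tecSetoid ((G.ends e).1)
                    = Quotient.mk G.tecSetoid x₀)).card := by
            apply Finset.card_le_card
            intro e he
            obtain ⟨-, hb, hcls⟩ := Finset.mem_filter.mp he
            exact Finset.mem_filter.mpr ⟨Finset.mem_univ _, G.isBridge_of_mq hb, key _ hcls⟩
          have s2 : (Finset.univ.filter (fun e : ι => (G.mq u v).IsBridge e ∧
                Quotient.mk (G.mq u v).tecSetoid (((G.mq u v).ends e).2) = z')).card
              ≤ (Finset.univ.filter (fun e : ι => G.IsBridge e ∧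
                  Quotient.mk G.tecSetoid ((G.ends e).2)
                    = Quotient.mk G.tecSetoid x₀)).card := by
            apply Finset.card_le_card
            intro e he
            obtain ⟨-, hb, hcls⟩ := Finset.mem_filter.mp he
            exact Finset.mem_filter.mpr ⟨Finset.mem_univ _, G.isBridge_of_mq hb, key _ hcls⟩
          omega
  -- assemble
  calc G.LL = ∑ z : Quotient G.tecSetoid, w (G.bdeg z) := G.LL_eq
    _ = ∑ z' : Quotient (G.mq u v).tecSetoid,
        ∑ z ∈ Finset.univ.filter (fun z => G.phi u v z = z'), w (G.bdeg z) :=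
      (Finset.sum_fiberwise_of_maps_to (fun z _ => Finset.mem_univ (G.phi u v z)) _).symm
    _ ≤ ∑ z' : Quotient (G.mq u v).tecSetoid,
        (w ((G.mq u v).bdeg z')
          + (if z' = G.phi u v (Quotient.mk G.tecSetoid u) then 2 else 0)) :=
      Finset.sum_le_sum (fun z' _ => fib z')
    _ = (∑ z' : Quotient (G.mq u v).tecSetoid, w ((G.mq u v).bdeg z'))
        + ∑ z' : Quotient (G.mq u v).tecSetoid,
          (if z' = G.phi u v (Quotient.mk G.tecSetoid u) then 2 else 0) :=
      Finset.sum_add_distrib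
    _ = (G.mq u v).LL + 2 := by
      rw [← LL_eq, Finset.sum_ite_eq' Finset.univ
        (G.phi u v (Quotient.mk G.tecSetoid u)) (fun _ => 2)]
      simp

end MGraph
end SecF
section SecG
open Relation EtaAux
namespace MGraph
variable {ι₁ ι₂ : Type} [Fintype ι₁] [DecidableEq ι₁] [Fintype ι₂] [DecidableEq ι₂]

lemma isBridge_restrictL (T : MGraph (ι₁ ⊕ ι₂)) {e : ι₁}
    (h : T.IsBridge (Sum.inl e)) : T.restrictL.IsBridge e := by
  rw [isBridge_iff] at h ⊢
  intro hc
  apply h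
  exact EqvGen.mono (fun a b hab => by
    obtain ⟨f, hf, hff⟩ := hab
    exact ⟨Sum.inl f, fun hh => hf (Sum.inl.inj hh), hff⟩) _ _ hc

lemma isBridge_restrictR (T : MGraph (ι₁ ⊕ ι₂)) {e : ι₂}
    (h : T.IsBridge (Sum.inr e)) : T.restrictR.IsBridge e := by
  rw [isBridge_iff] at h ⊢
  intro hc
  apply h
  exact EqvGen.mono (fun a b hab => by
    obtain ⟨f, hf, hff⟩ := hab
    exact ⟨Sum.inr f, fun hh => hf (Sum.inr.inj hh), hff⟩) _ _ hc

lemma tec_restrictL (T : MGraph (ι₁ ⊕ ι₂)) {x y : T.V}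
    (h : T.restrictL.tec x y) : T.tec x y :=
  EqvGen.mono (fun a b hab => by
    obtain ⟨e, he, hh⟩ := hab
    exact ⟨Sum.inl e, fun hbr => he (T.isBridge_restrictL hbr), hh⟩) _ _ h

lemma tec_restrictR (T : MGraph (ι₁ ⊕ ι₂)) {x y : T.V}
    (h : T.restrictR.tec x y) : T.tec x y :=
  EqvGen.mono (fun a b hab => by
    obtain ⟨e, he, hh⟩ := hab
    exact ⟨Sum.inr e, fun hbr => he (T.isBridge_restrictR hbr), hh⟩) _ _ h

end MGraph
end SecG
section SecH
open Relation EtaAux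
namespace EtaAux

/-- split a filter-card over a sum type -/
lemma filter_sum_card {α β : Type*} [Fintype α] [Fintype β] (P : α ⊕ β → Prop)
    [DecidablePred P] :
    (Finset.univ.filter P).card
      = (Finset.univ.filter (fun a => P (Sum.inl a))).card
        + (Finset.univ.filter (fun b => P (Sum.inr b))).card := by
  classical
  rw [← Fintype.card_subtype, ← Fintype.card_subtype, ← Fintype.card_subtype,
    ← Fintype.card_sum]
  apply Fintype.card_congr
  exact {
    toFun := fun x => match x with
      | ⟨Sum.inl a, h⟩ => Sum.inl ⟨a, h⟩
      | ⟨Sum.inr b, h⟩ => Sum.inr ⟨b, h⟩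
    invFun := fun s => match s with
      | Sum.inl ⟨a, h⟩ => ⟨Sum.inl a, h⟩
      | Sum.inr ⟨b, h⟩ => ⟨Sum.inr b, h⟩
    left_inv := by rintro ⟨x | x, hx⟩ <;> rfl
    right_inv := by rintro (⟨a, h⟩ | ⟨b, h⟩) <;> rfl }

lemma card_filter_iff {β : Type*} [Fintype β] (p q : β → Prop)
    [DecidablePred p] [DecidablePred q] (h : ∀ x, p x ↔ q x) :
    (Finset.univ.filter p).card = (Finset.univ.filter q).card := by
  congr 1
  exact Finset.filter_congr (fun x _ => h x)

end EtaAux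

namespace MGraph
variable {ι₁ ι₂ : Type} [Fintype ι₁] [DecidableEq ι₁] [Fintype ι₂] [DecidableEq ι₂]

lemma base_case (T : MGraph (ι₁ ⊕ ι₂))
    (h1 : ∀ x y : T.V, T.restrictL.tec x y → x = y)
    (h2 : ∀ x y : T.V, T.restrictR.tec x y → x = y) :
    T.restrictL.LL + T.restrictR.LL ≤ 2 * Fintype.card T.V + T.LL := by
  -- every non-loop edge is a bridge in its own colour
  have ab1 : ∀ e : ι₁, (T.ends (Sum.inl e)).1 ≠ (T.ends (Sum.inl e)).2 →
      T.restrictL.IsBridge e := by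
    intro e hnl
    by_contra hnb
    exact hnl (h1 _ _ (T.restrictL.tec_of_nonbridge hnb))
  have ab2 : ∀ e : ι₂, (T.ends (Sum.inr e)).1 ≠ (T.ends (Sum.inr e)).2 →
      T.restrictR.IsBridge e := by
    intro e hnl
    by_contra hnb
    exact hnl (h2 _ _ (T.restrictR.tec_of_nonbridge hnb))
  -- if total colour-bridge-degree at v is ≤ 1, every non-loop edge at v is a T-bridge
  have s1 : ∀ v : T.V,
      T.restrictL.bdeg (Quotient.mk T.restrictL.tecSetoid v)
        + T.restrictR.bdeg (Quotient.mk T.restrictR.tecSetoid v) ≤ 1 →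
      ∀ g : ι₁ ⊕ ι₂, ((T.ends g).1 = v ∨ (T.ends g).2 = v) →
        (T.ends g).1 ≠ (T.ends g).2 → T.IsBridge g := by
    intro v hv g hginc hgnl
    rw [isBridge_iff]
    intro hconn
    -- get a connection starting at v and ending elsewhere
    have hcvq : ∃ q : T.V, q ≠ v ∧ T.conn {x | x ≠ g} v q := by
      rcases hginc with hh | hh
      · exact ⟨(T.ends g).2, fun hq => hgnl (hh.trans hq.symm), hh ▸ hconn⟩
      · exact ⟨(T.ends g).1, fun hq => hgnl (hq.trans hh.symm), hh ▸ EqvGen.symm _ _ hconn⟩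
    obtain ⟨q, hqv, hcq⟩ := hcvq
    have hrtg := (eqvGen_iff_rtg (fun a b h => T.adjOn_symm h)).mp hcq
    obtain ⟨c, d, hcd, hc, hd⟩ := EtaAux.crossing (A := {w : T.V | w = v}) hrtg rfl hqv
    obtain ⟨g', hg', hends'⟩ := hcd
    have hcv : c = v := hc
    have hdv : d ≠ v := hd
    -- g' is a non-loop edge at v distinct from g
    have hg'nl : (T.ends g').1 ≠ (T.ends g').2 := by
      rcases hends' with hh | hh <;> rw [hh] <;> intro hcc <;>
        exact hdv (by subst hcv; first
          | exact hcc.symm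
          | exact hcc)
    have hg'inc : (T.ends g').1 = v ∨ (T.ends g').2 = v := by
      rcases hends' with hh | hh
      · exact Or.inl (by rw [hh]; exact hcv)
      · exact Or.inr (by rw [hh]; exact hcv)
    -- now count
    rcases g with e | e <;> rcases g' with f | f
    · -- both colour 1
      have hbe := ab1 e hgnl
      have hbf := ab1 f hg'nl
      have hef : e ≠ f := fun hh => hg' (congrArg Sum.inl hh.symm)
      have h2le : 2 ≤ T.restrictL.bdeg (Quotient.mk T.restrictL.tecSetoid v) := by
        refine T.restrictL.two_le_bdeg hef hbe ?_ hbf ?_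
        · rcases hginc with h | h
          · exact Or.inl (congrArg _ h)
          · exact Or.inr (congrArg _ h)
        · rcases hg'inc with h | h
          · exact Or.inl (congrArg _ h)
          · exact Or.inr (congrArg _ h)
      omega
    · -- g colour 1, g' colour 2
      have hbe := ab1 e hgnl
      have hbf := ab2 f hg'nl
      have hle1 : 1 ≤ T.restrictL.bdeg (Quotient.mk T.restrictL.tecSetoid v) := by
        refine T.restrictL.one_le_bdeg hbe ?_
        rcases hginc with h | h
        · exact Or.inl (congrArg _ h)
        · exact Or.inr (congrArg _ h)
      have hle2 : 1 ≤ T.restrictR.bdeg (Quotient.mk T.restrictR.tecSetoid v) := by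
        refine T.restrictR.one_le_bdeg hbf ?_
        rcases hg'inc with h | h
        · exact Or.inl (congrArg _ h)
        · exact Or.inr (congrArg _ h)
      omega
    · -- g colour 2, g' colour 1
      have hbe := ab2 e hgnl
      have hbf := ab1 f hg'nl
      have hle1 : 1 ≤ T.restrictR.bdeg (Quotient.mk T.restrictR.tecSetoid v) := by
        refine T.restrictR.one_le_bdeg hbe ?_
        rcases hginc with h | h
        · exact Or.inl (congrArg _ h)
        · exact Or.inr (congrArg _ h)
      have hle2 : 1 ≤ T.restrictL.bdeg (Quotient.mk T.restrictL.tecSetoid v) := by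
        refine T.restrictL.one_le_bdeg hbf ?_
        rcases hg'inc with h | h
        · exact Or.inl (congrArg _ h)
        · exact Or.inr (congrArg _ h)
      omega
    · -- both colour 2
      have hbe := ab2 e hgnl
      have hbf := ab2 f hg'nl
      have hef : e ≠ f := fun hh => hg' (congrArg Sum.inr hh.symm)
      have h2le : 2 ≤ T.restrictR.bdeg (Quotient.mk T.restrictR.tecSetoid v) := by
        refine T.restrictR.two_le_bdeg hef hbe ?_ hbf ?_
        · rcases hginc with h | h
          · exact Or.inl (congrArg _ h)
          · exact Or.inr (congrArg _ h)
        · rcases hg'inc with h | h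
          · exact Or.inl (congrArg _ h)
          · exact Or.inr (congrArg _ h)
      omega
  -- trivial T-classes at low-degree vertices
  have s2 : ∀ v : T.V,
      T.restrictL.bdeg (Quotient.mk T.restrictL.tecSetoid v)
        + T.restrictR.bdeg (Quotient.mk T.restrictR.tecSetoid v) ≤ 1 →
      ∀ y : T.V, T.tec v y → y = v := by
    intro v hv y hty
    by_contra hne
    have hrtg := (eqvGen_iff_rtg (fun a b h => T.adjOn_symm h)).mp hty
    obtain ⟨c, d, hcd, hc, hd⟩ := EtaAux.crossing (A := {w : T.V | w = v}) hrtg rfl hne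
    obtain ⟨g, hg, hends⟩ := hcd
    have hcv : c = v := hc
    have hdv : d ≠ v := hd
    have hnl : (T.ends g).1 ≠ (T.ends g).2 := by
      rcases hends with hh | hh <;> rw [hh] <;> intro hcc
      · exact hdv (hcc.symm.trans hcv)
      · exact hdv (hcc.trans hcv)
    have hinc : (T.ends g).1 = v ∨ (T.ends g).2 = v := by
      rcases hends with hh | hh
      · exact Or.inl (by rw [hh]; exact hcv)
      · exact Or.inr (by rw [hh]; exact hcv)
    exact hg (s1 v hv g hinc hnl)
  -- degree formula at low-degree vertices
  have s3 : ∀ v : T.V,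
      T.restrictL.bdeg (Quotient.mk T.restrictL.tecSetoid v)
        + T.restrictR.bdeg (Quotient.mk T.restrictR.tecSetoid v) ≤ 1 →
      T.bdeg (Quotient.mk T.tecSetoid v)
        = T.restrictL.bdeg (Quotient.mk T.restrictL.tecSetoid v)
          + T.restrictR.bdeg (Quotient.mk T.restrictR.tecSetoid v) := by
    intro v hv
    have hclsT : ∀ x : T.V,
        (Quotient.mk T.tecSetoid x = Quotient.mk T.tecSetoid v) ↔ x = v := by
      intro x
      exact ⟨fun h => s2 v hv x (T.tec_symm (T.tec_of_mk_eq h)), fun h => by rw [h]⟩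
    have hcls1 : ∀ x : T.V,
        (Quotient.mk T.restrictL.tecSetoid x = Quotient.mk T.restrictL.tecSetoid v) ↔ x = v := by
      intro x
      exact ⟨fun h => h1 x v (T.restrictL.tec_of_mk_eq h), fun h => by rw [h]⟩
    have hcls2 : ∀ x : T.V,
        (Quotient.mk T.restrictR.tecSetoid x = Quotient.mk T.restrictR.tecSetoid v) ↔ x = v := by
      intro x
      exact ⟨fun h => h2 x v (T.restrictR.tec_of_mk_eq h), fun h => by rw [h]⟩
    have hbeq1 : ∀ e : ι₁, ((T.ends (Sum.inl e)).1 = v ∨ (T.ends (Sum.inl e)).2 = v) →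
        (T.IsBridge (Sum.inl e) ↔ T.restrictL.IsBridge e) := by
      intro e hinc
      constructor
      · exact T.isBridge_restrictL
      · intro hb
        refine s1 v hv _ hinc (fun hl => ?_)
        exact T.restrictL.not_isBridge_of_loop hl hb
    have hbeq2 : ∀ e : ι₂, ((T.ends (Sum.inr e)).1 = v ∨ (T.ends (Sum.inr e)).2 = v) →
        (T.IsBridge (Sum.inr e) ↔ T.restrictR.IsBridge e) := by
      intro e hinc
      constructor
      · exact T.isBridge_restrictR
      · intro hb
        refine s1 v hv _ hinc (fun hl => ?_)
        exact T.restrictR.not_isBridge_of_loop hl hb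
    have e1L : (Finset.univ.filter (fun e : ι₁ => T.IsBridge (Sum.inl e) ∧
          Quotient.mk T.tecSetoid ((T.ends (Sum.inl e)).1) = Quotient.mk T.tecSetoid v)).card
        = (Finset.univ.filter (fun e : ι₁ => T.restrictL.IsBridge e ∧
          Quotient.mk T.restrictL.tecSetoid ((T.restrictL.ends e).1)
            = Quotient.mk T.restrictL.tecSetoid v)).card := by
      refine EtaAux.card_filter_iff _ _ (fun e => ?_)
      constructor
      · rintro ⟨hb, hc⟩
        have hev : (T.ends (Sum.inl e)).1 = v := (hclsT _).mp hc
        exact ⟨T.isBridge_restrictL hb, (hcls1 _).mpr hev⟩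
      · rintro ⟨hb, hc⟩
        have hev : (T.ends (Sum.inl e)).1 = v := (hcls1 _).mp hc
        exact ⟨(hbeq1 e (Or.inl hev)).mpr hb, (hclsT _).mpr hev⟩
    have e2L : (Finset.univ.filter (fun e : ι₁ => T.IsBridge (Sum.inl e) ∧
          Quotient.mk T.tecSetoid ((T.ends (Sum.inl e)).2) = Quotient.mk T.tecSetoid v)).card
        = (Finset.univ.filter (fun e : ι₁ => T.restrictL.IsBridge e ∧
          Quotient.mk T.restrictL.tecSetoid ((T.restrictL.ends e).2)
            = Quotient.mk T.restrictL.tecSetoid v)).card := by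
      refine EtaAux.card_filter_iff _ _ (fun e => ?_)
      constructor
      · rintro ⟨hb, hc⟩
        have hev : (T.ends (Sum.inl e)).2 = v := (hclsT _).mp hc
        exact ⟨T.isBridge_restrictL hb, (hcls1 _).mpr hev⟩
      · rintro ⟨hb, hc⟩
        have hev : (T.ends (Sum.inl e)).2 = v := (hcls1 _).mp hc
        exact ⟨(hbeq1 e (Or.inr hev)).mpr hb, (hclsT _).mpr hev⟩
    have e1R : (Finset.univ.filter (fun e : ι₂ => T.IsBridge (Sum.inr e) ∧
          Quotient.mk T.tecSetoid ((T.ends (Sum.inr e)).1) = Quotient.mk T.tecSetoid v)).card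
        = (Finset.univ.filter (fun e : ι₂ => T.restrictR.IsBridge e ∧
          Quotient.mk T.restrictR.tecSetoid ((T.restrictR.ends e).1)
            = Quotient.mk T.restrictR.tecSetoid v)).card := by
      refine EtaAux.card_filter_iff _ _ (fun e => ?_)
      constructor
      · rintro ⟨hb, hc⟩
        have hev : (T.ends (Sum.inr e)).1 = v := (hclsT _).mp hc
        exact ⟨T.isBridge_restrictR hb, (hcls2 _).mpr hev⟩
      · rintro ⟨hb, hc⟩
        have hev : (T.ends (Sum.inr e)).1 = v := (hcls2 _).mp hc
        exact ⟨(hbeq2 e (Or.inl hev)).mpr hb, (hclsT _).mpr hev⟩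
    have e2R : (Finset.univ.filter (fun e : ι₂ => T.IsBridge (Sum.inr e) ∧
          Quotient.mk T.tecSetoid ((T.ends (Sum.inr e)).2) = Quotient.mk T.tecSetoid v)).card
        = (Finset.univ.filter (fun e : ι₂ => T.restrictR.IsBridge e ∧
          Quotient.mk T.restrictR.tecSetoid ((T.restrictR.ends e).2)
            = Quotient.mk T.restrictR.tecSetoid v)).card := by
      refine EtaAux.card_filter_iff _ _ (fun e => ?_)
      constructor
      · rintro ⟨hb, hc⟩
        have hev : (T.ends (Sum.inr e)).2 = v := (hclsT _).mp hc
        exact ⟨T.isBridge_restrictR hb, (hcls2 _).mpr hev⟩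
      · rintro ⟨hb, hc⟩
        have hev : (T.ends (Sum.inr e)).2 = v := (hcls2 _).mp hc
        exact ⟨(hbeq2 e (Or.inr hev)).mpr hb, (hclsT _).mpr hev⟩
    show (Finset.univ.filter (fun g : ι₁ ⊕ ι₂ => T.IsBridge g ∧
          Quotient.mk T.tecSetoid ((T.ends g).1) = Quotient.mk T.tecSetoid v)).card
        + (Finset.univ.filter (fun g : ι₁ ⊕ ι₂ => T.IsBridge g ∧
          Quotient.mk T.tecSetoid ((T.ends g).2) = Quotient.mk T.tecSetoid v)).card = _
    rw [EtaAux.filter_sum_card (fun g : ι₁ ⊕ ι₂ => T.IsBridge g ∧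
          Quotient.mk T.tecSetoid ((T.ends g).1) = Quotient.mk T.tecSetoid v),
        EtaAux.filter_sum_card (fun g : ι₁ ⊕ ι₂ => T.IsBridge g ∧
          Quotient.mk T.tecSetoid ((T.ends g).2) = Quotient.mk T.tecSetoid v),
        e1L, e2L, e1R, e2R]
    show _ = (_ + _) + (_ + _)
    omega
  -- assemble
  have hbij1 : Function.Bijective (Quotient.mk T.restrictL.tecSetoid) :=
    ⟨fun x y h => h1 x y (Quotient.exact h), fun q => Quotient.exists_rep q⟩
  have hbij2 : Function.Bijective (Quotient.mk T.restrictR.tecSetoid) :=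
    ⟨fun x y h => h2 x y (Quotient.exact h), fun q => Quotient.exists_rep q⟩
  have hL1 : T.restrictL.LL = ∑ v : T.V,
      w (T.restrictL.bdeg (Quotient.mk T.restrictL.tecSetoid v)) := by
    rw [LL_eq]
    exact (Fintype.sum_bijective _ hbij1 _ _ (fun v => rfl)).symm
  have hL2 : T.restrictR.LL = ∑ v : T.V,
      w (T.restrictR.bdeg (Quotient.mk T.restrictR.tecSetoid v)) := by
    rw [LL_eq]
    exact (Fintype.sum_bijective _ hbij2 _ _ (fun v => rfl)).symm
  have key : ∀ v : T.V,
      w (T.restrictL.bdeg (Quotient.mk T.restrictL.tecSetoid v))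
        + w (T.restrictR.bdeg (Quotient.mk T.restrictR.tecSetoid v))
      ≤ 2 + (if T.restrictL.bdeg (Quotient.mk T.restrictL.tecSetoid v)
              + T.restrictR.bdeg (Quotient.mk T.restrictR.tecSetoid v) ≤ 1
            then w (T.bdeg (Quotient.mk T.tecSetoid v)) else 0) := by
    intro v
    by_cases hv : T.restrictL.bdeg (Quotient.mk T.restrictL.tecSetoid v)
        + T.restrictR.bdeg (Quotient.mk T.restrictR.tecSetoid v) ≤ 1
    · rw [if_pos hv, s3 v hv]
      exact le_of_eq (w_add_eq hv)
    · rw [if_neg hv]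
      have := w_add_le hv
      omega
  have hite : ∑ v : T.V, (if T.restrictL.bdeg (Quotient.mk T.restrictL.tecSetoid v)
        + T.restrictR.bdeg (Quotient.mk T.restrictR.tecSetoid v) ≤ 1
      then w (T.bdeg (Quotient.mk T.tecSetoid v)) else 0) ≤ T.LL := by
    rw [LL_eq]
    calc ∑ v : T.V, (if T.restrictL.bdeg (Quotient.mk T.restrictL.tecSetoid v)
            + T.restrictR.bdeg (Quotient.mk T.restrictR.tecSetoid v) ≤ 1
          then w (T.bdeg (Quotient.mk T.tecSetoid v)) else 0)
        = ∑ v ∈ Finset.univ.filter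
            (fun v => T.restrictL.bdeg (Quotient.mk T.restrictL.tecSetoid v)
              + T.restrictR.bdeg (Quotient.mk T.restrictR.tecSetoid v) ≤ 1),
            w (T.bdeg (Quotient.mk T.tecSetoid v)) := (Finset.sum_filter _ _).symm
      _ = ∑ z ∈ (Finset.univ.filter
            (fun v => T.restrictL.bdeg (Quotient.mk T.restrictL.tecSetoid v)
              + T.restrictR.bdeg (Quotient.mk T.restrictR.tecSetoid v) ≤ 1)).image
            (Quotient.mk T.tecSetoid), w (T.bdeg z) :=
          Eq.symm (Finset.sum_image (fun x hx y _ hxy =>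
            (s2 x (Finset.mem_filter.mp hx).2 y (T.tec_of_mk_eq hxy)).symm))
      _ ≤ ∑ z : Quotient T.tecSetoid, w (T.bdeg z) :=
          Finset.sum_le_sum_of_subset_of_nonneg (Finset.subset_univ _)
            (fun z _ _ => Nat.zero_le _)
  calc T.restrictL.LL + T.restrictR.LL
      = ∑ v : T.V, (w (T.restrictL.bdeg (Quotient.mk T.restrictL.tecSetoid v))
          + w (T.restrictR.bdeg (Quotient.mk T.restrictR.tecSetoid v))) := by
        rw [hL1, hL2, ← Finset.sum_add_distrib]
    _ ≤ ∑ v : T.V, (2 + (if T.restrictL.bdeg (Quotient.mk T.restrictL.tecSetoid v)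
            + T.restrictR.bdeg (Quotient.mk T.restrictR.tecSetoid v) ≤ 1
          then w (T.bdeg (Quotient.mk T.tecSetoid v)) else 0)) :=
        Finset.sum_le_sum (fun v _ => key v)
    _ = 2 * Fintype.card T.V
        + ∑ v : T.V, (if T.restrictL.bdeg (Quotient.mk T.restrictL.tecSetoid v)
            + T.restrictR.bdeg (Quotient.mk T.restrictR.tecSetoid v) ≤ 1
          then w (T.bdeg (Quotient.mk T.tecSetoid v)) else 0) := by
        rw [Finset.sum_add_distrib, Finset.sum_const, Finset.card_univ, smul_eq_mul, mul_comm]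
    _ ≤ 2 * Fintype.card T.V + T.LL := by
        have := hite
        omega

end MGraph
end SecH
section SecI
open Relation EtaAux
namespace MGraph

lemma main_aux (n : ℕ) : ∀ (ι₁ ι₂ : Type) [Fintype ι₁] [DecidableEq ι₁]
    [Fintype ι₂] [DecidableEq ι₂] (T : MGraph (ι₁ ⊕ ι₂)), Fintype.card T.V ≤ n →
    T.restrictL.LL + T.restrictR.LL ≤ 2 * Fintype.card T.V + T.LL := by
  induction n with
  | zero =>
      intro ι₁ ι₂ i1 i2 i3 i4 T hcard
      have hemp : IsEmpty T.V := Fintype.card_eq_zero_iff.mp (Nat.le_antisymm hcard (Nat.zero_le _))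
      exact T.base_case (fun x => hemp.elim x) (fun x => hemp.elim x)
  | succ n ih =>
      intro ι₁ ι₂ i1 i2 i3 i4 T hcard
      by_cases hex : ∃ u v : T.V, u ≠ v ∧ (T.restrictL.tec u v ∨ T.restrictR.tec u v)
      · obtain ⟨u, v, hne, hcase⟩ := hex
        have hsurj : Function.Surjective (Quotient.mk (mset u v) : T.V → _) :=
          fun q => Quotient.exists_rep q
        have hninj : ¬ Function.Injective (Quotient.mk (mset u v) : T.V → _) := by
          intro hinj
          exact hne (hinj (Quotient.sound (mset_rel.mpr (Or.inr (Or.inl ⟨rfl, rfl⟩)))))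
        have hqlt : Fintype.card (Quotient (mset u v)) < Fintype.card T.V :=
          Fintype.card_lt_of_surjective_not_injective _ hsurj hninj
        have hVq : Fintype.card (T.mq u v).V = Fintype.card (Quotient (mset u v)) :=
          Fintype.card_congr (Equiv.refl _)
        have hcard' : Fintype.card (T.mq u v).V ≤ n := by omega
        have IH := ih ι₁ ι₂ (T.mq u v) hcard'
        have hrl : (T.mq u v).restrictL = (T.restrictL).mq u v := rfl
        have hrr : (T.mq u v).restrictR = (T.restrictR).mq u v := rfl
        rw [hrl, hrr] at IH
        rcases hcase with htc | htc
        · have e1 : ((T.restrictL).mq u v).LL = T.restrictL.LL := (T.restrictL).LL_mq_eq htc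
          have e2 : T.restrictR.LL ≤ ((T.restrictR).mq u v).LL + 2 := (T.restrictR).LL_le_mq u v
          have eT : (T.mq u v).LL = T.LL := T.LL_mq_eq (T.tec_restrictL htc)
          rw [e1, eT] at IH
          omega
        · have e1 : ((T.restrictR).mq u v).LL = T.restrictR.LL := (T.restrictR).LL_mq_eq htc
          have e2 : T.restrictL.LL ≤ ((T.restrictL).mq u v).LL + 2 := (T.restrictL).LL_le_mq u v
          have eT : (T.mq u v).LL = T.LL := T.LL_mq_eq (T.tec_restrictR htc)
          rw [e1, eT] at IH
          omega
      · push_neg at hex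
        refine T.base_case (fun x y h => ?_) (fun x y h => ?_)
        · by_contra hne
          exact (hex x y hne).1 h
        · by_contra hne
          exact (hex x y hne).2 h

lemma main_nat {ι₁ ι₂ : Type} [Fintype ι₁] [DecidableEq ι₁]
    [Fintype ι₂] [DecidableEq ι₂] (T : MGraph (ι₁ ⊕ ι₂)) :
    T.restrictL.LL + T.restrictR.LL ≤ 2 * Fintype.card T.V + T.LL :=
  main_aux (Fintype.card T.V) ι₁ ι₂ T le_rfl

end MGraph
end SecI

/-- If `T′` is the edge-disjoint union of two spanning subgraphs `T₁`, `T₂`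
on the vertex set `V′`, then
`η(T′) = ½(𝔏(T₁) + 𝔏(T₂) − 𝔏(T′) − 2|V′|) ≤ 0`. -/
theorem eta_nonpos (ι₁ ι₂ : Type) [Fintype ι₁] [DecidableEq ι₁]
    [Fintype ι₂] [DecidableEq ι₂] (T : MGraph (ι₁ ⊕ ι₂)) :
    ((T.restrictL.LL : ℝ) + T.restrictR.LL - T.LL
        - 2 * Fintype.card T.V) / 2 ≤ 0 := by
  have h := T.main_nat
  have h' : (T.restrictL.LL : ℝ) + T.restrictR.LL
      ≤ 2 * (Fintype.card T.V : ℝ) + T.LL := by exact_mod_cast h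
  linarith
end
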